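/- arXiv:1505.03346 — 4 statements merged into one kernel-verified Lean document; each statement's English description precedes it below -/
import Mathlib

section
/- Let a, b, m, p be positive real numbers and let k be a positive integer. Then ∫₀^∞ x^{2k−1} Q_m(a x, b) e^{−p x²} dx = Γ(k) Γ(m, b²/2) / (2 p^k Γ(m)) + Σ_{l=0}^{k−1} a² b^{2m} Γ(k) · ₁F₁(l+1, m+1, a²b²/(2a²+4p)) · e^{−b²/2} / ( Γ(m+1) · p^{k−l} · 2^{m−l+1} · (a²+2p)^{l+1} ), where the integral on the left converges. -/
open MeasureTheory Real Filter

/-- Upper incomplete gamma function `Γ(s,x) = ∫_x^∞ t^(s-1) e^(-t) dt`. -/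
noncomputable def uGamma (s x : ℝ) : ℝ := ∫ t in Set.Ioi x, t ^ (s - 1) * Real.exp (-t)

/-- Generalized Marcum Q-function, defined by its canonical series
`Q_m(a,b) = Σ_{l=0}^∞ e^{-a²/2} (a²/2)^l / l! · Γ(m+l, b²/2)/Γ(m+l)`. -/
noncomputable def marcumQ (m a b : ℝ) : ℝ :=
  ∑' l : ℕ, Real.exp (-(a ^ 2) / 2) * (a ^ 2 / 2) ^ l / (Nat.factorial l) *
    (uGamma (m + l) (b ^ 2 / 2) / Real.Gamma (m + l))

/-- Pochhammer symbol `(x)_n = Γ(x+n)/Γ(x)`. -/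
noncomputable def poch (x : ℝ) (n : ℕ) : ℝ := Real.Gamma (x + n) / Real.Gamma x

/-- Kummer confluent hypergeometric function `₁F₁(α,β,z) = Σ_n (α)_n z^n / ((β)_n n!)`. -/
noncomputable def kummer (α β z : ℝ) : ℝ :=
  ∑' n : ℕ, poch α n * z ^ n / (poch β n * Nat.factorial n)

/-- Modified Bessel function of the first kind
`I_ν(z) = Σ_j (z/2)^(ν+2j) / (j! Γ(ν+j+1))`. -/
noncomputable def besselI (ν z : ℝ) : ℝ :=
  ∑' j : ℕ, (z / 2) ^ (ν + 2 * j) / (Nat.factorial j * Real.Gamma (ν + j + 1))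


set_option maxHeartbeats 1000000
section MQAuxSection
namespace MQAux
open Set Finset

lemma integrableOn_gammaIntegrand {s x : ℝ} (hs : 0 < s) (hx : 0 ≤ x) :
    IntegrableOn (fun t : ℝ => t ^ (s - 1) * Real.exp (-t)) (Set.Ioi x) := by
  have h := (Real.GammaIntegral_convergent hs).mono_set (Set.Ioi_subset_Ioi hx)
  exact h.congr_fun (fun t _ => mul_comm _ _) measurableSet_Ioi

lemma uGamma_nonneg (s : ℝ) {x : ℝ} (hx : 0 ≤ x) : 0 ≤ uGamma s x :=
  setIntegral_nonneg measurableSet_Ioi fun t ht =>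
    mul_nonneg (Real.rpow_nonneg (hx.trans (le_of_lt ht)) _) (Real.exp_pos _).le

lemma uGamma_le_Gamma {s x : ℝ} (hs : 0 < s) (hx : 0 ≤ x) : uGamma s x ≤ Real.Gamma s := by
  have h1 : uGamma s x ≤ ∫ t in Set.Ioi (0:ℝ), t ^ (s - 1) * Real.exp (-t) := by
    apply setIntegral_mono_set (integrableOn_gammaIntegrand hs le_rfl)
    · filter_upwards [self_mem_ae_restrict measurableSet_Ioi] with t ht
      exact mul_nonneg (Real.rpow_nonneg (le_of_lt ht) _) (Real.exp_pos _).le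
    · exact HasSubset.Subset.eventuallyLE (Set.Ioi_subset_Ioi hx)
  rw [Real.Gamma_eq_integral hs]
  refine h1.trans_eq ?_
  exact setIntegral_congr_fun measurableSet_Ioi fun t _ => mul_comm _ _

lemma uGamma_succ {s x : ℝ} (hs : 0 < s) (hx : 0 < x) :
    uGamma (s + 1) x = s * uGamma s x + x ^ s * Real.exp (-x) := by
  have hderiv : ∀ t ∈ Set.Ici x, HasDerivAt (fun t : ℝ => -(t ^ s * Real.exp (-t)))
      (t ^ s * Real.exp (-t) - s * (t ^ (s - 1) * Real.exp (-t))) t := by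
    intro t ht
    have ht0 : t ≠ 0 := ne_of_gt (lt_of_lt_of_le hx ht)
    have h1 : HasDerivAt (fun t : ℝ => t ^ s) (s * t ^ (s - 1)) t :=
      Real.hasDerivAt_rpow_const (Or.inl ht0)
    have h2 : HasDerivAt (fun t : ℝ => Real.exp (-t)) (-Real.exp (-t)) t := by
      simpa using (hasDerivAt_neg t).exp
    have := (h1.mul h2).neg
    refine this.congr_deriv ?_
    ring
  have hint : IntegrableOn
      (fun t : ℝ => t ^ s * Real.exp (-t) - s * (t ^ (s - 1) * Real.exp (-t)))
      (Set.Ioi x) := by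
    have ha : IntegrableOn (fun t : ℝ => t ^ s * Real.exp (-t)) (Set.Ioi x) := by
      have := integrableOn_gammaIntegrand (s := s + 1) (by linarith) hx.le
      simpa using this
    exact ha.sub ((integrableOn_gammaIntegrand hs hx.le).const_mul s)
  have htend : Tendsto (fun t : ℝ => -(t ^ s * Real.exp (-t))) atTop (nhds 0) := by
    have := (tendsto_rpow_mul_exp_neg_mul_atTop_nhds_zero s 1 one_pos).neg
    rw [neg_zero] at this
    refine this.congr fun t => ?_
    simp [one_mul]
  have key := integral_Ioi_of_hasDerivAt_of_tendsto' hderiv hint htend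
  simp only [neg_neg, zero_sub] at key
  have expand : uGamma (s + 1) x = (∫ t in Set.Ioi x,
      (t ^ s * Real.exp (-t) - s * (t ^ (s - 1) * Real.exp (-t))))
      + s * uGamma s x := by
    rw [uGamma, uGamma, add_sub_cancel_right, ← integral_const_mul,
      ← integral_add hint ((integrableOn_gammaIntegrand hs hx.le).const_mul s)]
    congr 1
    funext t
    ring
  rw [expand, key]
  ring


lemma ratio_expand {m x : ℝ} (hm : 0 < m) (hx : 0 < x) (l : ℕ) :
    uGamma (m + l) x / Real.Gamma (m + l) =
      uGamma m x / Real.Gamma m +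
        Real.exp (-x) * ∑ j ∈ Finset.range l, x ^ (m + j) / Real.Gamma (m + j + 1) := by
  induction l with
  | zero => simp
  | succ n ih =>
    have hmn : (0:ℝ) < m + n := by positivity
    have hΓ : (0:ℝ) < Real.Gamma (m + n) := Real.Gamma_pos_of_pos hmn
    have hcast : (m + ((n:ℕ)+1 : ℕ) : ℝ) = (m + n) + 1 := by push_cast; ring
    rw [Finset.sum_range_succ, hcast, uGamma_succ hmn hx,
      Real.Gamma_add_one (ne_of_gt hmn)]
    have : ((m+n) * uGamma (m+n) x + x^(m+n) * Real.exp (-x)) / ((m+n) * Real.Gamma (m+n))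
        = uGamma (m+n) x / Real.Gamma (m+n)
          + x^(m+(n:ℝ)) * Real.exp (-x) / ((m+n) * Real.Gamma (m+n)) := by
      field_simp
    rw [this, ih]
    ring

lemma fact_mul_le_Gamma {m : ℝ} (hm : 0 < m) (j : ℕ) :
    Real.Gamma (m + 1) * (j.factorial : ℝ) ≤ Real.Gamma (m + j + 1) := by
  induction j with
  | zero => simp
  | succ n ih =>
    have h1 : Real.Gamma (m + ((n:ℕ)+1:ℕ) + 1) = (m + n + 1) * Real.Gamma (m + n + 1) := by
      rw [show (m + ((n:ℕ)+1:ℕ) + 1 : ℝ) = (m + (n:ℝ) + 1) + 1 by push_cast; ring,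
        Real.Gamma_add_one (by positivity)]
    rw [h1, Nat.factorial_succ]
    push_cast
    have h2 : ((n:ℝ) + 1) * (Real.Gamma (m+1) * n.factorial) ≤ ((n:ℝ)+1) * Real.Gamma (m+n+1) :=
      mul_le_mul_of_nonneg_left ih (by positivity)
    have h3 : ((n:ℝ)+1) * Real.Gamma (m+n+1) ≤ (m+(n:ℝ)+1) * Real.Gamma (m+n+1) :=
      mul_le_mul_of_nonneg_right (by linarith) (Real.Gamma_pos_of_pos (by positivity)).le
    calc Real.Gamma (m+1) * (((n:ℝ)+1) * n.factorial)
        = ((n:ℝ)+1) * (Real.Gamma (m+1) * n.factorial) := by ring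
      _ ≤ (m+(n:ℝ)+1) * Real.Gamma (m+n+1) := h2.trans h3

lemma key_id (r n : ℕ) (t : ℝ) :
    (1-t)^(r+1) * ∑ l ∈ Finset.range (n+1), ((l+r).choose r : ℝ) * t^l
      + t^(n+1) * ∑ l ∈ Finset.range (r+1), ((l+n).choose n : ℝ) * (1-t)^l = 1 := by
  induction n with
  | zero =>
    have hg := geom_sum_mul (1-t) (r+1)
    have h1 : ∑ l ∈ Finset.range 1, ((l+r).choose r : ℝ) * t^l = 1 := by simp
    have h3 : ∑ l ∈ Finset.range (r+1), ((l+0).choose 0 : ℝ) * (1-t)^l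
        = ∑ l ∈ Finset.range (r+1), (1-t)^l :=
      Finset.sum_congr rfl (fun l _ => by simp)
    rw [h1, h3]
    linear_combination -hg
  | succ n ih =>
    have tele : ∑ l ∈ Finset.range (r+1),
        ((((l+n).choose (n+1) : ℝ)) * (1-t)^l - (((l+1+n).choose (n+1) : ℝ)) * (1-t)^(l+1))
        = (((0+n).choose (n+1) : ℝ)) * (1-t)^0 - (((r+1+n).choose (n+1) : ℝ)) * (1-t)^(r+1) := by
      have := Finset.sum_range_sub' (f := fun l => (((l+n).choose (n+1) : ℝ)) * (1-t)^l) (r+1)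
      convert this using 2
    have hz : ((0+n).choose (n+1) : ℝ) = 0 := by
      simp [Nat.choose_eq_zero_of_lt]
    have hsymm : ((r+1+n).choose (n+1) : ℝ) = ((n+1+r).choose r : ℝ) := by
      have h1 : (r+1+n).choose (n+1) = (r+1+n).choose r := by
        have h2 := Nat.choose_symm (n := r+1+n) (k := n+1) (by omega)
        rw [show r+1+n-(n+1) = r by omega] at h2
        exact h2.symm
      rw [h1, show r+1+n = n+1+r by omega]
    have claim : (1-t)^(r+1) * (((n+1+r).choose r : ℝ)) +
        t * ∑ l ∈ Finset.range (r+1), ((l+(n+1)).choose (n+1) : ℝ) * (1-t)^l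
        - ∑ l ∈ Finset.range (r+1), ((l+n).choose n : ℝ) * (1-t)^l = 0 := by
      have perterm : ∀ l, t * ((l+(n+1)).choose (n+1) : ℝ) * (1-t)^l - ((l+n).choose n : ℝ) * (1-t)^l
          = (((l+n).choose (n+1) : ℝ)) * (1-t)^l - (((l+1+n).choose (n+1) : ℝ)) * (1-t)^(l+1) := by
        intro l
        have hp : ((l+(n+1)).choose (n+1) : ℝ) = ((l+n).choose n : ℝ) + ((l+n).choose (n+1) : ℝ) := by
          have := Nat.choose_succ_succ (l+n) n
          rw [show l + (n+1) = (l+n)+1 by omega]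
          exact_mod_cast this
        have hq : ((l+1+n).choose (n+1) : ℝ) = ((l+n).choose n : ℝ) + ((l+n).choose (n+1) : ℝ) := by
          have := Nat.choose_succ_succ (l+n) n
          rw [show l + 1 + n = (l+n)+1 by omega]
          exact_mod_cast this
        rw [hp, hq]
        ring
      have : t * ∑ l ∈ Finset.range (r+1), ((l+(n+1)).choose (n+1) : ℝ) * (1-t)^l
          - ∑ l ∈ Finset.range (r+1), ((l+n).choose n : ℝ) * (1-t)^l
          = ∑ l ∈ Finset.range (r+1),
            ((((l+n).choose (n+1) : ℝ)) * (1-t)^l - (((l+1+n).choose (n+1) : ℝ)) * (1-t)^(l+1)) := by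
        rw [Finset.mul_sum, ← Finset.sum_sub_distrib]
        exact Finset.sum_congr rfl fun l _ => by rw [← perterm l]; ring
      have h4 := this.trans tele
      rw [hz, hsymm] at h4
      linear_combination h4
    have expand : ∑ l ∈ Finset.range (n+1+1), ((l+r).choose r : ℝ) * t^l
        = ∑ l ∈ Finset.range (n+1), ((l+r).choose r : ℝ) * t^l
          + ((n+1+r).choose r : ℝ) * t^(n+1) := Finset.sum_range_succ _ _
    rw [expand]
    have goal2 : (1-t)^(r+1) * (((n+1+r).choose r : ℝ) * t^(n+1))
        + t^(n+1+1) * ∑ l ∈ Finset.range (r+1), ((l+(n+1)).choose (n+1) : ℝ) * (1-t)^l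
        - t^(n+1) * ∑ l ∈ Finset.range (r+1), ((l+n).choose n : ℝ) * (1-t)^l = 0 := by
      linear_combination (t^(n+1)) * claim
    linear_combination ih + goal2


lemma tail_eq {t : ℝ} (ht0 : 0 ≤ t) (ht1 : t < 1) (r n : ℕ) :
    ∑' l : ℕ, (if n < l then ((l+r).choose r : ℝ) * t ^ l else 0)
      = t^(n+1) / (1-t)^(r+1) * ∑ l ∈ Finset.range (r+1), ((l+n).choose n : ℝ) * (1-t)^l := by
  have hnorm : ‖t‖ < 1 := by rwa [Real.norm_eq_abs, abs_of_nonneg ht0]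
  have hsum : HasSum (fun l : ℕ => ((l+r).choose r : ℝ) * t^l) (1/(1-t)^(r+1)) :=
    hasSum_choose_mul_geometric_of_norm_lt_one r hnorm
  have hS := hsum.summable
  have hfin : Summable (fun l : ℕ => if l < n+1 then ((l+r).choose r : ℝ) * t^l else 0) :=
    summable_of_ne_finset_zero (s := Finset.range (n+1)) (fun b hb => if_neg (by simpa using hb))
  have heq : ∀ l : ℕ, (if n < l then ((l+r).choose r : ℝ) * t^l else 0)
      = ((l+r).choose r : ℝ) * t^l - (if l < n+1 then ((l+r).choose r : ℝ) * t^l else 0) := by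
    intro l; rcases lt_or_ge n l with h | h
    · rw [if_pos h, if_neg (by omega)]; ring
    · rw [if_neg (by omega), if_pos (by omega)]; ring
  calc ∑' l : ℕ, (if n < l then ((l+r).choose r : ℝ) * t ^ l else 0)
      = ∑' l : ℕ, (((l+r).choose r : ℝ) * t^l - (if l < n+1 then ((l+r).choose r:ℝ)*t^l else 0)) :=
        tsum_congr heq
    _ = (∑' l, ((l+r).choose r : ℝ) * t^l) - ∑' l, (if l < n+1 then ((l+r).choose r:ℝ)*t^l else 0) :=
        Summable.tsum_sub hS hfin
    _ = 1/(1-t)^(r+1) - ∑ l ∈ Finset.range (n+1), ((l+r).choose r : ℝ) * t^l := by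
        rw [hsum.tsum_eq]
        congr 1
        rw [tsum_eq_sum (s := Finset.range (n+1)) (fun b hb => if_neg (by simpa using hb))]
        exact Finset.sum_congr rfl fun l hl => if_pos (Finset.mem_range.mp hl)
    _ = t^(n+1) / (1-t)^(r+1) * ∑ l ∈ Finset.range (r+1), ((l+n).choose n : ℝ) * (1-t)^l := by
        have h1t : (0:ℝ) < 1 - t := by linarith
        have key := key_id r n t
        have hne : (1-t)^(r+1) ≠ 0 := pow_ne_zero _ (ne_of_gt h1t)
        field_simp
        linear_combination -key


lemma gaussian_moment_integrable {q : ℝ} (hq : 0 < q) (N : ℕ) :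
    IntegrableOn (fun x : ℝ => x ^ N * Real.exp (-q * x^2)) (Set.Ioi 0) := by
  have h := integrableOn_rpow_mul_exp_neg_mul_sq hq (s := (N:ℝ)) (lt_of_lt_of_le neg_one_lt_zero (Nat.cast_nonneg N))
  exact h.congr_fun (fun x hx => by simp only [Real.rpow_natCast]) measurableSet_Ioi

lemma gaussian_moment {q : ℝ} (hq : 0 < q) (M : ℕ) :
    ∫ x in Set.Ioi (0:ℝ), x ^ (2*M+1) * Real.exp (-q * x^2)
      = (M.factorial : ℝ) / (2 * q ^ (M+1)) := by
  have h1 : EqOn (fun x : ℝ => x ^ (2*M+1) * Real.exp (-q * x^2))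
      (fun x : ℝ => x ^ ((2*M+1 : ℕ) : ℝ) * Real.exp (-q * x ^ (2:ℝ))) (Set.Ioi 0) := by
    intro x hx
    simp only
    rw [Real.rpow_natCast, Real.rpow_two]
  rw [setIntegral_congr_fun measurableSet_Ioi h1,
    integral_rpow_mul_exp_neg_mul_rpow (by norm_num) (lt_of_lt_of_le neg_one_lt_zero (Nat.cast_nonneg _)) hq]
  have h2 : -(((2*M+1 : ℕ) : ℝ)+1)/2 = -((M+1 : ℕ) : ℝ) := by push_cast; ring
  have h3 : (((2*M+1 : ℕ) : ℝ)+1)/2 = (M:ℝ)+1 := by push_cast; ring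
  rw [h2, h3, Real.rpow_neg hq.le, Real.rpow_natCast, Real.Gamma_nat_eq_factorial]
  field_simp


lemma d_nonneg {m x₀ : ℝ} (hm : 0 < m) (hx₀ : 0 < x₀) (j : ℕ) :
    0 ≤ x₀ ^ (m + (j:ℝ)) / Real.Gamma (m + j + 1) :=
  div_nonneg (Real.rpow_nonneg hx₀.le _) (Real.Gamma_pos_of_pos (by positivity)).le

lemma d_le {m x₀ : ℝ} (hm : 0 < m) (hx₀ : 0 < x₀) (j : ℕ) :
    x₀ ^ (m + (j:ℝ)) / Real.Gamma (m + j + 1)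
      ≤ x₀ ^ m * x₀ ^ j / (Real.Gamma (m+1) * (j.factorial : ℝ)) := by
  have h3 : x₀ ^ (m + (j:ℝ)) = x₀ ^ m * x₀ ^ (j:ℕ) := by
    rw [Real.rpow_add hx₀, Real.rpow_natCast]
  rw [h3]
  apply div_le_div_of_nonneg_left (by positivity) (by positivity)
  exact fact_mul_le_Gamma hm j

lemma D_le {m x₀ : ℝ} (hm : 0 < m) (hx₀ : 0 < x₀) (l : ℕ) :
    ∑ j ∈ Finset.range l, x₀ ^ (m + (j:ℝ)) / Real.Gamma (m + j + 1)
      ≤ x₀ ^ m * Real.exp x₀ / Real.Gamma (m+1) := by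
  have h1 : ∀ j ∈ Finset.range l, x₀ ^ (m + (j:ℝ)) / Real.Gamma (m + j + 1)
      ≤ x₀ ^ m / Real.Gamma (m+1) * (x₀ ^ j / (j.factorial : ℝ)) := by
    intro j _
    refine (d_le hm hx₀ j).trans_eq ?_
    field_simp
  refine (Finset.sum_le_sum h1).trans ?_
  rw [← Finset.mul_sum]
  have h2 : ∑ j ∈ Finset.range l, x₀ ^ j / (j.factorial : ℝ) ≤ Real.exp x₀ := by
    have h3 := Real.sum_le_exp_of_nonneg hx₀.le l
    exact h3
  calc x₀ ^ m / Real.Gamma (m+1) * ∑ j ∈ Finset.range l, x₀ ^ j / (j.factorial : ℝ)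
      ≤ x₀ ^ m / Real.Gamma (m+1) * Real.exp x₀ :=
        mul_le_mul_of_nonneg_left h2 (by positivity)
    _ = x₀ ^ m * Real.exp x₀ / Real.Gamma (m+1) := by ring

lemma choose_le_two_pow' (l j : ℕ) : ((l+j).choose j : ℝ) ≤ 2 ^ (l+j) := by
  have h : (l+j).choose j ≤ 2 ^ (l+j) := by
    calc (l+j).choose j ≤ ∑ i ∈ Finset.range (l+j+1), (l+j).choose i :=
          Finset.single_le_sum (fun i _ => Nat.zero_le _) (Finset.mem_range.mpr (by omega))
      _ = 2 ^ (l+j) := Nat.sum_range_choose (l+j)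
  exact_mod_cast h

lemma col_summable {m x₀ t : ℝ} (hm : 0 < m) (hx₀ : 0 < x₀) (ht0 : 0 ≤ t) (l : ℕ) :
    Summable (fun j : ℕ => ((l+j).choose j : ℝ) * t^j *
      (x₀ ^ (m + (j:ℝ)) / Real.Gamma (m + j + 1))) := by
  refine Summable.of_nonneg_of_le
    (f := fun j => (2^l * x₀^m / Real.Gamma (m+1)) * ((2*t*x₀)^j / (j.factorial : ℝ)))
    (fun j => ?_) (fun j => ?_) ?_
  · have := d_nonneg hm hx₀ j
    positivity
  ·
    have h1 : ((l+j).choose j : ℝ) * t^j * (x₀ ^ (m + (j:ℝ)) / Real.Gamma (m + j + 1))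
        ≤ (2:ℝ)^(l+j) * t^j * (x₀ ^ m * x₀ ^ j / (Real.Gamma (m+1) * (j.factorial : ℝ))) := by
      apply mul_le_mul
      · exact mul_le_mul_of_nonneg_right (choose_le_two_pow' l j) (by positivity)
      · exact d_le hm hx₀ j
      · exact d_nonneg hm hx₀ j
      · positivity
    refine h1.trans_eq ?_
    simp only [pow_add, mul_pow]
    field_simp
  · exact (Real.summable_pow_div_factorial (2*t*x₀)).mul_left _

lemma kummer_row {m x₀ t : ℝ} (hm : 0 < m) (hx₀ : 0 < x₀) (l : ℕ) :
    ∑' n : ℕ, ((l+n).choose n : ℝ) * t^n * (x₀ ^ (m + (n:ℝ)) / Real.Gamma (m + n + 1))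
      = x₀ ^ m / Real.Gamma (m+1) * kummer ((l:ℝ)+1) (m+1) (t*x₀) := by
  rw [kummer, ← tsum_mul_left]
  refine tsum_congr fun n => ?_
  unfold poch
  have h2 : Real.Gamma ((l:ℝ)+1) = (l.factorial : ℝ) := Real.Gamma_nat_eq_factorial l
  have h1 : Real.Gamma ((l:ℝ)+1+(n:ℝ)) = ((l+n).factorial : ℝ) := by
    rw [show (l:ℝ)+1+(n:ℝ) = ((l+n : ℕ):ℝ)+1 by push_cast; ring, Real.Gamma_nat_eq_factorial]
  have h3 : x₀ ^ (m + (n:ℝ)) = x₀ ^ m * x₀ ^ (n:ℕ) := by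
    rw [Real.rpow_add hx₀, Real.rpow_natCast]
  have h4 : Real.Gamma (m+1+(n:ℝ)) = Real.Gamma (m+(n:ℝ)+1) := by ring_nf
  have hfact : ((l+n).choose n : ℝ) * (n.factorial : ℝ) * (l.factorial : ℝ)
      = ((l+n).factorial : ℝ) := by
    have h5 := Nat.choose_mul_factorial_mul_factorial (show n ≤ l+n by omega)
    rw [show l+n-n = l by omega] at h5
    exact_mod_cast h5
  rw [h1, h2, h4, h3, mul_pow]
  have hg1 : Real.Gamma (m+1) ≠ 0 := (Real.Gamma_pos_of_pos (by positivity)).ne'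
  have hg2 : Real.Gamma (m+(n:ℝ)+1) ≠ 0 := (Real.Gamma_pos_of_pos (by positivity)).ne'
  have hl : (l.factorial : ℝ) ≠ 0 := by exact_mod_cast l.factorial_ne_zero
  have hn : (n.factorial : ℝ) ≠ 0 := by exact_mod_cast n.factorial_ne_zero
  field_simp
  linear_combination t^n * hfact


noncomputable def Af (a p : ℝ) (k : ℕ) (l : ℕ) : ℝ :=
  ((k-1).factorial : ℝ) / (2*(p + a^2/2)^k) *
    (((l+(k-1)).choose (k-1) : ℝ) * (a^2/(a^2+2*p))^l)

noncomputable def Rf (m b : ℝ) (l : ℕ) : ℝ := uGamma (m + l) (b^2/2) / Real.Gamma (m + l)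

noncomputable def df (m b : ℝ) (j : ℕ) : ℝ := (b^2/2) ^ (m + (j:ℝ)) / Real.Gamma (m + j + 1)


lemma uGamma_Gamma_nonneg {m x : ℝ} (hm : 0 < m) (hx : 0 ≤ x) (l : ℕ) :
    0 ≤ uGamma (m + l) x / Real.Gamma (m + l) := by
  apply div_nonneg _ (Real.Gamma_nonneg_of_nonneg (by positivity))
  exact setIntegral_nonneg measurableSet_Ioi fun t ht =>
    mul_nonneg (Real.rpow_nonneg (hx.trans (le_of_lt ht)) _) (Real.exp_pos _).le

lemma tsum_AR_eq (a b m p : ℝ) (k : ℕ) (ha : 0 < a) (hb : 0 < b) (hm : 0 < m)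
    (hp : 0 < p) (hk : 0 < k) :
    ∑' l : ℕ, Af a p k l * Rf m b l
      = Real.Gamma k * uGamma m (b ^ 2 / 2) / (2 * p ^ k * Real.Gamma m) +
        ∑ l ∈ Finset.range k, a ^ 2 * b ^ (2 * m) * Real.Gamma k *
            kummer (l + 1) (m + 1) (a ^ 2 * b ^ 2 / (2 * a ^ 2 + 4 * p)) *
            Real.exp (-(b ^ 2) / 2) /
          (Real.Gamma (m + 1) * p ^ (k - l) * 2 ^ (m - l + 1) * (a ^ 2 + 2 * p) ^ (l + 1)) := by
  have hx₀ : (0:ℝ) < b^2/2 := by positivity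
  have hq : (0:ℝ) < p + a^2/2 := by positivity
  have hden : (0:ℝ) < a^2+2*p := by positivity
  have ht0 : (0:ℝ) < a^2/(a^2+2*p) := by positivity
  have ht1 : a^2/(a^2+2*p) < 1 := by rw [div_lt_one hden]; linarith
  have hnorm : ‖a^2/(a^2+2*p)‖ < 1 := by
    rw [Real.norm_eq_abs, abs_of_nonneg ht0.le]; exact ht1
  have h1t : (0:ℝ) < 1 - a^2/(a^2+2*p) := by linarith
  have hqt : (p + a^2/2) * (1 - a^2/(a^2+2*p)) = p := by field_simp; ring
  have hkr : k = (k-1) + 1 := by omega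
  have hΓm : (0:ℝ) < Real.Gamma m := Real.Gamma_pos_of_pos hm
  have hΓm1 : (0:ℝ) < Real.Gamma (m+1) := Real.Gamma_pos_of_pos (by positivity)
  -- abbreviations (as plain terms)
  have hGk : Real.Gamma (k:ℝ) = ((k-1).factorial : ℝ) := by
    have h1 : ((k:ℕ):ℝ) = ((k-1 : ℕ):ℝ) + 1 := by
      rw [hkr]; push_cast; ring
    rw [h1, Real.Gamma_nat_eq_factorial]
  -- the constant C
  have hC0 : (0:ℝ) ≤ ((k-1).factorial : ℝ) / (2*(p + a^2/2)^k) := by positivity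
  -- HasSum of Af
  have hAhas : HasSum (Af a p k)
      ((((k-1).factorial : ℝ) / (2*(p + a^2/2)^k)) * (1/(1 - a^2/(a^2+2*p))^((k-1)+1))) := by
    exact (hasSum_choose_mul_geometric_of_norm_lt_one (k-1) hnorm).mul_left _
  have hAsum : Summable (Af a p k) := hAhas.summable
  have hA0 : ∀ l, 0 ≤ Af a p k l := fun l => by
    unfold Af; positivity
  -- key constant identity : C / (1-t)^k = (k-1)! / (2 p^k)
  have hSA : (((k-1).factorial : ℝ) / (2*(p + a^2/2)^k)) / (1 - a^2/(a^2+2*p))^k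
      = ((k-1).factorial : ℝ) / (2*p^k) := by
    have hpk : (p + a^2/2)^k * (1 - a^2/(a^2+2*p))^k = p^k := by
      rw [← mul_pow, hqt]
    rw [div_div, div_eq_div_iff (by positivity) (by positivity)]
    linear_combination (-2*((k-1).factorial:ℝ)) * hpk
  -- tsum of Af
  have hAtsum : ∑' l, Af a p k l = ((k-1).factorial : ℝ) / (2*p^k) := by
    rw [hAhas.tsum_eq, ← hkr]
    rw [show (((k-1).factorial : ℝ) / (2*(p + a^2/2)^k)) * (1/(1 - a^2/(a^2+2*p))^k)
      = (((k-1).factorial : ℝ) / (2*(p + a^2/2)^k)) / (1 - a^2/(a^2+2*p))^k by ring, hSA]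
  -- split R
  have hRsplit : ∀ l : ℕ, Rf m b l = uGamma m (b^2/2) / Real.Gamma m
      + Real.exp (-(b^2/2)) * ∑ j ∈ Finset.range l, df m b j := fun l =>
    ratio_expand hm hx₀ l
  have hD0 : ∀ l : ℕ, 0 ≤ ∑ j ∈ Finset.range l, df m b j :=
    fun l => Finset.sum_nonneg fun j _ => d_nonneg hm hx₀ j
  have hADsum : Summable (fun l => Af a p k l * ∑ j ∈ Finset.range l, df m b j) := by
    refine Summable.of_nonneg_of_le (fun l => mul_nonneg (hA0 l) (hD0 l)) (fun l => ?_)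
      (hAsum.mul_right ((b^2/2) ^ m * Real.exp (b^2/2) / Real.Gamma (m+1)))
    exact mul_le_mul_of_nonneg_left (D_le hm hx₀ l) (hA0 l)
  -- step 1 : split the tsum
  have step1 : ∑' l : ℕ, Af a p k l * Rf m b l
      = (((k-1).factorial : ℝ) / (2*p^k)) * (uGamma m (b^2/2) / Real.Gamma m)
        + Real.exp (-(b^2/2)) *
          ∑' l : ℕ, Af a p k l * ∑ j ∈ Finset.range l, df m b j := by
    have h1 : ∀ l : ℕ, Af a p k l * Rf m b l
        = Af a p k l * (uGamma m (b^2/2) / Real.Gamma m)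
          + Real.exp (-(b^2/2)) * (Af a p k l * ∑ j ∈ Finset.range l, df m b j) := by
      intro l; rw [hRsplit l]; ring
    rw [tsum_congr h1, Summable.tsum_add (hAsum.mul_right _) (hADsum.mul_left _),
      tsum_mul_right, tsum_mul_left, hAtsum]
  -- the swap
  have hswap : ∑' l : ℕ, Af a p k l * ∑ j ∈ Finset.range l, df m b j
      = ∑' j : ℕ, ∑' l : ℕ, (if j < l then Af a p k l * df m b j else 0) := by
    have hrow : ∀ l : ℕ, ∑' j : ℕ, (if j < l then Af a p k l * df m b j else 0)
        = Af a p k l * ∑ j ∈ Finset.range l, df m b j := by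
      intro l
      rw [tsum_eq_sum (s := Finset.range l)
        (fun j hj => if_neg (fun hc => hj (Finset.mem_range.mpr hc))), Finset.mul_sum]
      exact Finset.sum_congr rfl fun j hj => if_pos (Finset.mem_range.mp hj)
    have hU : Summable (Function.uncurry
        (fun l j : ℕ => if j < l then Af a p k l * df m b j else 0)) := by
      refine (summable_prod_of_nonneg ?_).mpr ⟨fun l => ?_, ?_⟩
      · intro pr
        simp only [Function.uncurry, Pi.zero_apply]
        split_ifs
        · exact mul_nonneg (hA0 _) (d_nonneg hm hx₀ _)
        · exact le_rfl
      · exact summable_of_ne_finset_zero (s := Finset.range l)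
          (fun j hj => if_neg (fun hc => hj (Finset.mem_range.mpr hc)))
      · refine hADsum.congr fun l => ?_
        exact (hrow l).symm
    exact (tsum_congr fun l => (hrow l).symm).trans (Summable.tsum_comm hU).symm
  -- evaluate columns
  have hcol : ∀ j : ℕ, ∑' l : ℕ, (if j < l then Af a p k l * df m b j else 0)
      = df m b j * ((((k-1).factorial : ℝ) / (2*p^k)) * (a^2/(a^2+2*p))^(j+1) *
          ∑ l ∈ Finset.range k, ((l+j).choose j : ℝ) * (1 - a^2/(a^2+2*p))^l) := by
    intro j
    have h1 : ∀ l : ℕ, (if j < l then Af a p k l * df m b j else 0)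
        = df m b j * ((((k-1).factorial : ℝ) / (2*(p + a^2/2)^k)) *
            (if j < l then ((l+(k-1)).choose (k-1) : ℝ) * (a^2/(a^2+2*p))^l else 0)) := by
      intro l
      split_ifs with h
      · unfold Af; ring
      · simp
    rw [tsum_congr h1, tsum_mul_left, tsum_mul_left, tail_eq ht0.le ht1 (k-1) j]
    rw [← hkr]
    congr 1
    rw [show (((k-1).factorial : ℝ) / (2*(p + a^2/2)^k)) *
        ((a^2/(a^2+2*p))^(j+1) / (1 - a^2/(a^2+2*p))^k *
          ∑ l ∈ Finset.range k, ((l+j).choose j : ℝ) * (1 - a^2/(a^2+2*p))^l)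
      = ((((k-1).factorial : ℝ) / (2*(p + a^2/2)^k)) / (1 - a^2/(a^2+2*p))^k) *
          (a^2/(a^2+2*p))^(j+1) *
          ∑ l ∈ Finset.range k, ((l+j).choose j : ℝ) * (1 - a^2/(a^2+2*p))^l by ring, hSA]
  -- exchange with the finite sum and evaluate rows by kummer_row
  have hfinal2 : ∑' j : ℕ, df m b j * ((((k-1).factorial : ℝ) / (2*p^k)) *
        (a^2/(a^2+2*p))^(j+1) *
        ∑ l ∈ Finset.range k, ((l+j).choose j : ℝ) * (1 - a^2/(a^2+2*p))^l)
      = ∑ l ∈ Finset.range k, ((((k-1).factorial : ℝ) / (2*p^k)) * (a^2/(a^2+2*p)) *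
          (1 - a^2/(a^2+2*p))^l *
          ((b^2/2) ^ m / Real.Gamma (m+1) *
            kummer ((l:ℝ)+1) (m+1) ((a^2/(a^2+2*p)) * (b^2/2)))) := by
    have h1 : ∀ j : ℕ, df m b j * ((((k-1).factorial : ℝ) / (2*p^k)) *
          (a^2/(a^2+2*p))^(j+1) *
          ∑ l ∈ Finset.range k, ((l+j).choose j : ℝ) * (1 - a^2/(a^2+2*p))^l)
        = ∑ l ∈ Finset.range k, ((((k-1).factorial : ℝ) / (2*p^k)) * (a^2/(a^2+2*p)) *
            (1 - a^2/(a^2+2*p))^l *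
            (((l+j).choose j : ℝ) * (a^2/(a^2+2*p))^j * df m b j)) := by
      intro j
      rw [Finset.mul_sum, Finset.mul_sum]
      refine Finset.sum_congr rfl fun l _ => ?_
      rw [pow_succ]
      ring
    rw [tsum_congr h1]
    rw [Summable.tsum_finsetSum (fun l _ => by
      exact ((col_summable hm hx₀ ht0.le l).mul_left _))]
    refine Finset.sum_congr rfl fun l _ => ?_
    rw [tsum_mul_left]
    congr 1
    simp only [df]
    exact kummer_row hm hx₀ l
  -- final algebraic matching
  rw [step1, hswap, tsum_congr hcol, hfinal2, Finset.mul_sum]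
  congr 1
  · rw [hGk]; ring
  · refine Finset.sum_congr rfl fun l hl => ?_
    have hlk : l < k := Finset.mem_range.mp hl
    have harg : (a^2/(a^2+2*p)) * (b^2/2) = a^2*b^2/(2*a^2+4*p) := by
      field_simp; ring
    have hexp : -(b^2)/2 = -(b^2/2) := by ring
    have hb2m : b^(2*m) = (2:ℝ)^m * (b^2/2)^m := by
      have h1 : b^(2*m) = ((b^2 : ℝ))^m := by
        rw [show (2:ℝ)*m = ((2:ℕ):ℝ)*m by norm_num, Real.rpow_mul hb.le, Real.rpow_natCast]
      have h2 : (2:ℝ)^m * (b^2/2)^m = ((2:ℝ)*(b^2/2))^m :=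
        (Real.mul_rpow (by norm_num) hx₀.le).symm
      rw [h1, h2]
      congr 1
      ring
    have h2pow : (2:ℝ)^(m - (l:ℝ) + 1) = (2:ℝ)^m * 2 / (2:ℝ)^(l:ℕ) := by
      rw [eq_div_iff (by positivity : ((2:ℝ)^(l:ℕ)) ≠ 0), ← Real.rpow_natCast 2 l,
        ← Real.rpow_add (by norm_num : (0:ℝ) < 2)]
      rw [show m - (l:ℝ) + 1 + (l:ℝ) = m + 1 by ring, Real.rpow_add (by norm_num : (0:ℝ) < 2),
        Real.rpow_one]
    have hpk' : (p:ℝ)^(k-l) = p^k / p^l := by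
      rw [eq_div_iff (by positivity : (p:ℝ)^l ≠ 0), ← pow_add]
      congr 1
      omega
    have h1tl : (1 - a^2/(a^2+2*p)) = 2*p/(a^2+2*p) := by field_simp; ring
    rw [harg, hGk, hexp, hb2m, h2pow, hpk', h1tl]
    simp only [div_pow]
    have hx0m : (0:ℝ) < (b^2/2)^m := Real.rpow_pos_of_pos hx₀ m
    have h2m : (0:ℝ) < (2:ℝ)^m := Real.rpow_pos_of_pos (by norm_num) m
    field_simp
    ring

lemma Rf_nonneg {m b : ℝ} (hm : 0 < m) (hb : 0 < b) (l : ℕ) : 0 ≤ Rf m b l :=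
  div_nonneg (uGamma_nonneg _ (by positivity)) (Real.Gamma_nonneg_of_nonneg (by positivity))

lemma Rf_le_one {m b : ℝ} (hm : 0 < m) (hb : 0 < b) (l : ℕ) : Rf m b l ≤ 1 := by
  rw [Rf, div_le_one (Real.Gamma_pos_of_pos (by positivity))]
  exact uGamma_le_Gamma (by positivity) (by positivity)

lemma marcumQ_nonneg {m b : ℝ} (hm : 0 < m) (hb : 0 < b) (c : ℝ) : 0 ≤ marcumQ m c b := by
  rw [marcumQ]
  refine tsum_nonneg fun l => mul_nonneg (by positivity) ?_
  exact Rf_nonneg hm hb l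

lemma marcumQ_le_one {m b : ℝ} (hm : 0 < m) (hb : 0 < b) (c : ℝ) : marcumQ m c b ≤ 1 := by
  have hy : (0:ℝ) ≤ c^2/2 := by positivity
  have hgsum : Summable (fun l : ℕ => Real.exp (-(c^2)/2) * ((c^2/2)^l / (l.factorial:ℝ))) :=
    (Real.summable_pow_div_factorial (c^2/2)).mul_left _
  have hgsum' : Summable (fun l : ℕ => Real.exp (-(c^2)/2) * (c^2/2)^l / (l.factorial:ℝ)) := by
    refine hgsum.congr fun l => ?_
    rw [mul_div_assoc]
  have hexpy : ∑' l : ℕ, (c^2/2)^l / (l.factorial:ℝ) = Real.exp (c^2/2) := by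
    rw [Real.exp_eq_exp_ℝ]
    exact (congrFun (NormedSpace.exp_eq_tsum_div (𝔸 := ℝ)) (c^2/2)).symm
  have hgval : ∑' l : ℕ, Real.exp (-(c^2)/2) * (c^2/2)^l / (l.factorial:ℝ) = 1 := by
    have : ∀ l : ℕ, Real.exp (-(c^2)/2) * (c^2/2)^l / (l.factorial:ℝ)
        = Real.exp (-(c^2)/2) * ((c^2/2)^l / (l.factorial:ℝ)) := fun l => mul_div_assoc _ _ _
    rw [tsum_congr this, tsum_mul_left, hexpy, ← Real.exp_add,
      show -(c^2)/2 + c^2/2 = 0 by ring, Real.exp_zero]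
  rw [marcumQ, ← hgval]
  refine Summable.tsum_le_tsum (fun l => ?_) ?_ hgsum'
  · exact mul_le_of_le_one_right (by positivity) (Rf_le_one hm hb l)
  · refine Summable.of_nonneg_of_le (fun l => mul_nonneg (by positivity) (Rf_nonneg hm hb l))
      (fun l => mul_le_of_le_one_right (by positivity) (Rf_le_one hm hb l)) hgsum'

lemma integral_part (a b m p : ℝ) (k : ℕ) (ha : 0 < a) (hb : 0 < b) (hm : 0 < m)
    (hp : 0 < p) (hk : 0 < k)
    (hARsum : Summable (fun l => Af a p k l * Rf m b l)) :
    IntegrableOn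
      (fun x : ℝ => x ^ (2*k-1) * marcumQ m (a*x) b * Real.exp (-p*x^2)) (Set.Ioi 0) ∧
    ∫ x in Set.Ioi (0:ℝ), x ^ (2*k-1) * marcumQ m (a*x) b * Real.exp (-p*x^2)
      = ∑' l : ℕ, Af a p k l * Rf m b l := by
  have hq : (0:ℝ) < p + a^2/2 := by positivity
  -- the summand functions
  set f : ℕ → ℝ → ℝ := fun l x => ((a^2/2)^l / (l.factorial : ℝ) * Rf m b l) *
    (x ^ (2*(k-1+l)+1) * Real.exp (-(p+a^2/2)*x^2)) with hf
  -- pointwise expansion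
  have stepA : ∀ x : ℝ, x ^ (2*k-1) * marcumQ m (a*x) b * Real.exp (-p*x^2)
      = ∑' l : ℕ, f l x := by
    intro x
    rw [marcumQ, ← tsum_mul_left, ← tsum_mul_right]
    refine tsum_congr fun l => ?_
    have hE : Real.exp (-((a*x) ^ 2) / 2) * Real.exp (-p*x^2)
        = Real.exp (-(p+a^2/2)*x^2) := by
      rw [← Real.exp_add]; congr 1; ring
    have hP : (((a*x)^2/2) : ℝ)^l = (a^2/2)^l * (x^2)^l := by
      rw [show ((a*x)^2/2 : ℝ) = (a^2/2) * x^2 by ring, mul_pow]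
    have hX : x^(2*k-1) * (x^2)^l = x^(2*(k-1+l)+1) := by
      rw [← pow_mul, ← pow_add]
      congr 1
      omega
    rw [hf]
    simp only
    rw [hP, ← hX, ← hE, Rf]
    ring
  have hInt : ∀ l, IntegrableOn (f l) (Set.Ioi 0) := fun l =>
    (gaussian_moment_integrable hq (2*(k-1+l)+1)).const_mul _
  have hIval : ∀ l, ∫ x in Set.Ioi (0:ℝ), f l x = Af a p k l * Rf m b l := by
    intro l
    rw [hf]
    simp only
    rw [integral_const_mul, gaussian_moment hq (k-1+l)]
    have hfact : ((l+(k-1)).choose (k-1) : ℝ) * ((k-1).factorial:ℝ) * (l.factorial:ℝ)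
        = ((k-1+l).factorial : ℝ) := by
      have h5 := Nat.choose_mul_factorial_mul_factorial (show k-1 ≤ l+(k-1) by omega)
      rw [show l+(k-1)-(k-1) = l by omega] at h5
      rw [show k-1+l = l+(k-1) by omega]
      exact_mod_cast h5
    have ht : (a^2/(a^2+2*p)) = (a^2/2)/(p+a^2/2) := by
      rw [div_eq_div_iff (by positivity) (by positivity)]
      ring
    have hqpow : (p+a^2/2)^(k-1+l+1) = (p+a^2/2)^k * (p+a^2/2)^l := by
      rw [← pow_add]
      congr 1
      omega
    rw [Af, ht, div_pow, hqpow]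
    have hl : (l.factorial : ℝ) ≠ 0 := by exact_mod_cast l.factorial_ne_zero
    rw [← hfact]
    have hq2 : a^2 + 2*p ≠ 0 := by positivity
    field_simp
    have hid : (a^2+p*2)⁻¹^l * 2^l * (a^2*(1/2)+p)^l = 1 := by
      rw [← mul_pow, ← mul_pow, show (a^2+p*2)⁻¹ * 2 * (a^2*(1/2)+p) = 1 from ?_, one_pow]
      rw [inv_mul_eq_div, div_mul_eq_mul_div, div_eq_one_iff_eq (by positivity : a^2+p*2 ≠ 0)]
      ring
    linear_combination (-(a^(l*2) * Rf m b l * ((l+(k-1)).choose (k-1) : ℝ))) * hid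
  have hfmeas : ∀ l, AEStronglyMeasurable (f l) (volume.restrict (Set.Ioi 0)) := by
    intro l
    apply Continuous.aestronglyMeasurable
    fun_prop
  have hR0 := Rf_nonneg hm hb
  have hf0 : ∀ l, ∀ x ∈ Set.Ioi (0:ℝ), 0 ≤ f l x := by
    intro l x hx
    rw [hf]
    simp only
    have := hR0 l
    have hx' : (0:ℝ) < x := hx
    positivity
  have hAR0 : ∀ l, 0 ≤ Af a p k l * Rf m b l := by
    intro l
    refine mul_nonneg ?_ (hR0 l)
    rw [Af]; positivity
  have hlint : ∀ l, ∫⁻ x in Set.Ioi (0:ℝ), ‖f l x‖ₑ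
      = ENNReal.ofReal (Af a p k l * Rf m b l) := by
    intro l
    have h0 : 0 ≤ᵐ[volume.restrict (Set.Ioi (0:ℝ))] f l := by
      filter_upwards [self_mem_ae_restrict measurableSet_Ioi] with x hx
      exact hf0 l x hx
    calc ∫⁻ x in Set.Ioi (0:ℝ), ‖f l x‖ₑ
        = ∫⁻ x in Set.Ioi (0:ℝ), ENNReal.ofReal (f l x) := by
          refine lintegral_congr_ae (h0.mono fun x hx => ?_)
          exact Real.enorm_eq_ofReal hx
      _ = ENNReal.ofReal (∫ x in Set.Ioi (0:ℝ), f l x) :=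
          (ofReal_integral_eq_lintegral_ofReal (hInt l) h0).symm
      _ = ENNReal.ofReal (Af a p k l * Rf m b l) := by rw [hIval l]
  have hswap : ∫ x in Set.Ioi (0:ℝ), (∑' l, f l x) = ∑' l, ∫ x in Set.Ioi (0:ℝ), f l x := by
    refine integral_tsum hfmeas ?_
    rw [tsum_congr hlint, ← ENNReal.ofReal_tsum_of_nonneg hAR0 hARsum]
    exact ENNReal.ofReal_ne_top
  -- summability at each point
  have hsum_x : ∀ x : ℝ, x ∈ Set.Ioi (0:ℝ) → Summable (fun l => f l x) := by
    intro x hx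
    have hx' : (0:ℝ) < x := hx
    refine Summable.of_nonneg_of_le (fun l => hf0 l x hx) (fun l => ?_)
      (((Real.summable_pow_div_factorial (a^2*x^2/2)).mul_left
        (x ^ (2*(k-1)+1) * Real.exp (-(p+a^2/2)*x^2))))
    rw [hf]
    simp only
    have h1 : x ^ (2*(k-1+l)+1) = x ^ (2*(k-1)+1) * (x^2)^l := by
      rw [← pow_mul, ← pow_add]
      congr 1
      omega
    have h2 : (a^2*x^2/2)^l = (a^2/2)^l * (x^2)^l := by
      rw [show (a^2*x^2/2 : ℝ) = (a^2/2) * x^2 by ring, mul_pow]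
    rw [h1, h2]
    have h3 : (a^2/2)^l / (l.factorial : ℝ) * Rf m b l ≤ (a^2/2)^l / (l.factorial : ℝ) :=
      mul_le_of_le_one_right (by positivity) (Rf_le_one hm hb l)
    calc (a^2/2)^l / (l.factorial : ℝ) * Rf m b l *
          (x ^ (2*(k-1)+1) * (x^2)^l * Real.exp (-(p+a^2/2)*x^2))
        ≤ (a^2/2)^l / (l.factorial : ℝ) *
          (x ^ (2*(k-1)+1) * (x^2)^l * Real.exp (-(p+a^2/2)*x^2)) := by
          refine mul_le_mul_of_nonneg_right h3 (by positivity)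
      _ = x ^ (2*(k-1)+1) * Real.exp (-(p+a^2/2)*x^2) * ((a^2/2)^l * (x^2)^l / (l.factorial:ℝ)) := by
          ring
  -- measurability of the full integrand
  have hFmeas : AEStronglyMeasurable
      (fun x : ℝ => x ^ (2*k-1) * marcumQ m (a*x) b * Real.exp (-p*x^2))
      (volume.restrict (Set.Ioi 0)) := by
    refine aestronglyMeasurable_of_tendsto_ae (u := atTop)
      (f := fun n x => ∑ l ∈ Finset.range n, f l x) (fun n => ?_) ?_
    · refine Continuous.aestronglyMeasurable ?_
      refine continuous_finset_sum _ fun l _ => ?_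
      fun_prop
    · filter_upwards [self_mem_ae_restrict measurableSet_Ioi] with x hx
      rw [stepA x]
      exact (hsum_x x hx).hasSum.tendsto_sum_nat
  -- integrability
  have hIntOn : IntegrableOn
      (fun x : ℝ => x ^ (2*k-1) * marcumQ m (a*x) b * Real.exp (-p*x^2)) (Set.Ioi 0) := by
    refine Integrable.mono' (gaussian_moment_integrable hp (2*k-1)) hFmeas ?_
    filter_upwards [self_mem_ae_restrict measurableSet_Ioi] with x hx
    have hx' : (0:ℝ) < x := hx
    have hQ0 := marcumQ_nonneg hm hb (a*x)
    have hQ1 := marcumQ_le_one hm hb (a*x)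
    rw [Real.norm_eq_abs, abs_of_nonneg (by positivity)]
    calc x ^ (2*k-1) * marcumQ m (a*x) b * Real.exp (-p*x^2)
        ≤ x ^ (2*k-1) * 1 * Real.exp (-p*x^2) := by
          refine mul_le_mul_of_nonneg_right ?_ (Real.exp_pos _).le
          exact mul_le_mul_of_nonneg_left hQ1 (by positivity)
      _ = x ^ (2*k-1) * Real.exp (-p*x^2) := by ring
  refine ⟨hIntOn, ?_⟩
  have heq : (fun x : ℝ => x ^ (2*k-1) * marcumQ m (a*x) b * Real.exp (-p*x^2))
      = fun x => ∑' l, f l x := funext stepA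
  rw [heq, hswap]
  exact tsum_congr hIval


end MQAux
end MQAuxSection

/-- closed form of `∫₀^∞ x^(2k-1) Q_m(ax,b) e^(-px²) dx` for
positive integer `k` and positive reals `a, b, m, p`. -/
theorem integral_marcumQ_closed_form (a b m p : ℝ) (k : ℕ)
    (ha : 0 < a) (hb : 0 < b) (hm : 0 < m) (hp : 0 < p) (hk : 0 < k) :
    IntegrableOn
      (fun x : ℝ => x ^ (2 * k - 1) * marcumQ m (a * x) b * Real.exp (-p * x ^ 2))
      (Set.Ioi 0) ∧
    ∫ x in Set.Ioi (0 : ℝ),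
        x ^ (2 * k - 1) * marcumQ m (a * x) b * Real.exp (-p * x ^ 2) =
      Real.Gamma k * uGamma m (b ^ 2 / 2) / (2 * p ^ k * Real.Gamma m) +
      ∑ l ∈ Finset.range k,
        a ^ 2 * b ^ (2 * m) * Real.Gamma k *
            kummer (l + 1) (m + 1) (a ^ 2 * b ^ 2 / (2 * a ^ 2 + 4 * p)) *
            Real.exp (-(b ^ 2) / 2) /
          (Real.Gamma (m + 1) * p ^ (k - l) * 2 ^ (m - l + 1) *
            (a ^ 2 + 2 * p) ^ (l + 1)) := by
  have hnorm : ‖a^2/(a^2+2*p)‖ < 1 := by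
    have hden : (0:ℝ) < a^2+2*p := by positivity
    rw [Real.norm_eq_abs, abs_of_nonneg (by positivity)]
    rw [div_lt_one hden]
    nlinarith
  have hA0 : ∀ l, 0 ≤ MQAux.Af a p k l := fun l => by
    unfold MQAux.Af; positivity
  have hAsum : Summable (MQAux.Af a p k) :=
    ((hasSum_choose_mul_geometric_of_norm_lt_one (k-1) hnorm).mul_left _).summable
  have hARsum : Summable (fun l => MQAux.Af a p k l * MQAux.Rf m b l) :=
    Summable.of_nonneg_of_le
      (fun l => mul_nonneg (hA0 l) (MQAux.Rf_nonneg hm hb l))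
      (fun l => mul_le_of_le_one_right (hA0 l) (MQAux.Rf_le_one hm hb l)) hAsum
  obtain ⟨h1, h2⟩ := MQAux.integral_part a b m p k ha hb hm hp hk hARsum
  exact ⟨h1, by rw [h2]; exact MQAux.tsum_AR_eq a b m p k ha hb hm hp hk⟩
end

section
/- Let a, b, k, m, p be positive real numbers. Then ∫₀^∞ x^{2k−1} Q_m(a x, b) e^{−p x²} dx = Σ_{l=0}^∞ a^{2l} · 2^{k−1} · Γ(k+l) · Γ(m+l, b²/2) / ( l! · Γ(m+l) · (a²+2p)^{k+l} ), where the integral on the left converges and the series on the right converges. -/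
open MeasureTheory Real Filter

/-!
Each term of the series defining `Q_m(ax, b)` is a Poisson weight `e^{-z} z^l / l!`, `z = a²x²/2`,
times the ratio `Γ(m+l, b²/2)/Γ(m+l) ∈ [0, 1]`. Hence `0 ≤ Q_m ≤ 1`, which makes the integrand
integrable, and all terms are nonnegative, so the integral may be taken term by term; the `l`-th
term is the Gaussian moment `∫₀^∞ x^{2(k+l)-1} e^{-(a²/2+p)x²} dx = Γ(k+l) / (2 (a²/2+p)^{k+l})`.
-/

open Set

lemma uGamma_nonneg (s : ℝ) {x : ℝ} (hx : 0 ≤ x) : 0 ≤ uGamma s x :=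
  setIntegral_nonneg measurableSet_Ioi fun _ ht =>
    mul_nonneg (rpow_nonneg (hx.trans ht.le) _) (exp_pos _).le

lemma uGamma_le_Gamma {s x : ℝ} (hs : 0 < s) (hx : 0 ≤ x) : uGamma s x ≤ Gamma s := by
  have hint : IntegrableOn (fun t : ℝ => t ^ (s - 1) * exp (-t)) (Ioi 0) := by
    simpa only [mul_comm] using GammaIntegral_convergent hs
  rw [Gamma_eq_integral hs]
  simp_rw [mul_comm (exp _)]
  refine setIntegral_mono_set hint ?_ (Ioi_subset_Ioi hx).eventuallyLE
  filter_upwards [ae_restrict_mem measurableSet_Ioi] with t ht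
  exact mul_nonneg (rpow_nonneg ht.le _) (exp_pos _).le

lemma integral_rpow_mul_exp_neg_mul_sq_eq_Gamma {s c : ℝ} (hs : 0 < s) (hc : 0 < c) :
    ∫ x in Ioi (0 : ℝ), x ^ (2 * s - 1) * exp (-c * x ^ 2) = Gamma s / (2 * c ^ s) := by
  have h := integral_rpow_mul_exp_neg_mul_rpow two_pos (by linarith : -1 < 2 * s - 1) hc
  simp_rw [rpow_two] at h
  rw [h, show -(2 * s - 1 + 1) / 2 = -s by ring, show (2 * s - 1 + 1) / 2 = s by ring,
    rpow_neg hc.le]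
  field_simp

lemma uGamma_div_Gamma_mem_Icc {s x : ℝ} (hs : 0 < s) (hx : 0 ≤ x) :
    uGamma s x / Gamma s ∈ Icc 0 1 :=
  ⟨div_nonneg (uGamma_nonneg s hx) (Gamma_pos_of_pos hs).le,
    (div_le_one (Gamma_pos_of_pos hs)).mpr (uGamma_le_Gamma hs hx)⟩

noncomputable def marcumQTerm (m a b : ℝ) (l : ℕ) : ℝ :=
  exp (-(a ^ 2) / 2) * (a ^ 2 / 2) ^ l / l.factorial *
    (uGamma (m + l) (b ^ 2 / 2) / Gamma (m + l))

section MarcumQ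

variable {m : ℝ} (a b : ℝ)

lemma marcumQTerm_nonneg (hm : 0 < m) (l : ℕ) : 0 ≤ marcumQTerm m a b l :=
  mul_nonneg (by positivity) (uGamma_div_Gamma_mem_Icc (by positivity) (by positivity)).1

lemma marcumQTerm_le_poisson (hm : 0 < m) (l : ℕ) :
    marcumQTerm m a b l ≤ exp (-(a ^ 2 / 2)) * (a ^ 2 / 2) ^ l / l.factorial := by
  rw [marcumQTerm, neg_div]
  exact mul_le_of_le_one_right (by positivity)
    (uGamma_div_Gamma_mem_Icc (by positivity) (by positivity)).2

lemma hasSum_marcumQTerm (hm : 0 < m) : HasSum (marcumQTerm m a b) (marcumQ m a b) :=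
  (Summable.of_nonneg_of_le (marcumQTerm_nonneg a b hm) (marcumQTerm_le_poisson a b hm)
    (ProbabilityTheory.hasSum_one_poissonMeasure ⟨a ^ 2 / 2, by positivity⟩).summable).hasSum

lemma marcumQ_nonneg (hm : 0 < m) : 0 ≤ marcumQ m a b :=
  (hasSum_marcumQTerm a b hm).nonneg (marcumQTerm_nonneg a b hm)

lemma marcumQ_le_one (hm : 0 < m) : marcumQ m a b ≤ 1 :=
  hasSum_le (marcumQTerm_le_poisson a b hm) (hasSum_marcumQTerm a b hm)
    (ProbabilityTheory.hasSum_one_poissonMeasure ⟨a ^ 2 / 2, by positivity⟩)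

end MarcumQ

@[fun_prop]
lemma measurable_marcumQTerm (m b : ℝ) (l : ℕ) : Measurable fun a => marcumQTerm m a b l := by
  unfold marcumQTerm
  fun_prop

@[fun_prop]
lemma measurable_marcumQ (m b : ℝ) : Measurable fun a => marcumQ m a b :=
  Measurable.tsum (measurable_marcumQTerm m b)

section Integrals

variable {a b k m p : ℝ}

lemma integral_rpow_mul_marcumQTerm_mul_exp (hk : 0 < k) (hp : 0 < p) (l : ℕ) :
    ∫ x in Ioi (0 : ℝ), x ^ (2 * k - 1) * marcumQTerm m (a * x) b l * exp (-p * x ^ 2) =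
      a ^ (2 * l) * 2 ^ (k - 1) * Gamma (k + l) * uGamma (m + l) (b ^ 2 / 2) /
        (l.factorial * Gamma (m + l) * (a ^ 2 + 2 * p) ^ (k + l)) := by
  set q := uGamma (m + l) (b ^ 2 / 2) / Gamma (m + l)
  set c := a ^ 2 / 2 + p
  have hc : 0 < c := by positivity
  have hintegrand : EqOn
      (fun x => x ^ (2 * k - 1) * marcumQTerm m (a * x) b l * exp (-p * x ^ 2))
      (fun x => (a ^ 2 / 2) ^ l / l.factorial * q *
        (x ^ (2 * (k + l) - 1) * exp (-c * x ^ 2))) (Ioi 0) := by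
    intro x (hx : 0 < x)
    have hpow : x ^ (2 * (k + l) - 1) = x ^ (2 * k - 1) * x ^ (2 * l) := by
      rw [← rpow_natCast, ← rpow_add hx]
      push_cast
      ring_nf
    have hexp : exp (-c * x ^ 2) = exp (-(a * x) ^ 2 / 2) * exp (-p * x ^ 2) := by
      rw [← exp_add]
      congr 1
      ring
    simp only [marcumQTerm, hpow, hexp]
    ring
  rw [setIntegral_congr_fun measurableSet_Ioi hintegrand, integral_const_mul,
    integral_rpow_mul_exp_neg_mul_sq_eq_Gamma (by positivity) hc]
  have hc2 : a ^ 2 + 2 * p = 2 * c := by ring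
  rw [hc2, mul_rpow zero_le_two hc.le, show k + (l : ℝ) = (k - 1) + l + 1 by ring,
    rpow_add two_pos, rpow_add two_pos, rpow_one, rpow_natCast, div_pow, pow_mul]
  have h2 : (2 : ℝ) ^ (k - 1) ≠ 0 := by positivity
  have hc' : c ^ (k - 1 + l + 1) ≠ 0 := by positivity
  field_simp
  ring

lemma integrableOn_rpow_mul_marcumQ_mul_exp (hk : 0 < k) (hm : 0 < m) (hp : 0 < p) :
    IntegrableOn (fun x => x ^ (2 * k - 1) * marcumQ m (a * x) b * exp (-p * x ^ 2))
      (Ioi 0) := by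
  refine (integrableOn_rpow_mul_exp_neg_mul_sq hp (by linarith : -1 < 2 * k - 1)).mono'
    (by fun_prop) ?_
  filter_upwards [ae_restrict_mem measurableSet_Ioi] with x (hx : 0 < x)
  have hxk : 0 ≤ x ^ (2 * k - 1) := rpow_nonneg hx.le _
  rw [norm_of_nonneg (by have := marcumQ_nonneg (a * x) b hm; positivity), mul_right_comm]
  exact mul_le_of_le_one_right (by positivity) (marcumQ_le_one _ _ hm)

end Integrals

theorem integral_marcumQ_series_general (a b k m p : ℝ)
    (hk : 0 < k) (hm : 0 < m) (hp : 0 < p) :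
    IntegrableOn
      (fun x : ℝ => x ^ (2 * k - 1) * marcumQ m (a * x) b * Real.exp (-p * x ^ 2))
      (Set.Ioi 0) ∧
    Summable (fun l : ℕ =>
      a ^ (2 * l) * 2 ^ (k - 1) * Real.Gamma (k + l) * uGamma (m + l) (b ^ 2 / 2) /
        (Nat.factorial l * Real.Gamma (m + l) * (a ^ 2 + 2 * p) ^ (k + l))) ∧
    ∫ x in Set.Ioi (0 : ℝ),
        x ^ (2 * k - 1) * marcumQ m (a * x) b * Real.exp (-p * x ^ 2) =
      ∑' l : ℕ,
        a ^ (2 * l) * 2 ^ (k - 1) * Real.Gamma (k + l) * uGamma (m + l) (b ^ 2 / 2) /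
          (Nat.factorial l * Real.Gamma (m + l) * (a ^ 2 + 2 * p) ^ (k + l)) := by
  set F : ℕ → ℝ → ℝ := fun l x => x ^ (2 * k - 1) * marcumQTerm m (a * x) b l * exp (-p * x ^ 2)
  have hF_nonneg : ∀ l, ∀ᵐ x ∂volume.restrict (Ioi 0), 0 ≤ F l x := fun l => by
    filter_upwards [ae_restrict_mem measurableSet_Ioi] with x (hx : 0 < x)
    have := marcumQTerm_nonneg (a * x) b hm l
    have := rpow_nonneg hx.le (2 * k - 1)
    positivity
  have hF_hasSum : ∀ x, HasSum (F · x)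
      (x ^ (2 * k - 1) * marcumQ m (a * x) b * exp (-p * x ^ 2)) := fun x =>
    ((hasSum_marcumQTerm (a * x) b hm).mul_left _).mul_right _
  have hint := integrableOn_rpow_mul_marcumQ_mul_exp (a := a) (b := b) hk hm hp
  -- The nonnegative terms dominate themselves: this is monotone convergence.
  have hseries := hasSum_integral_of_dominated_convergence F
    (fun l => (by fun_prop : Measurable (F l)).aestronglyMeasurable)
    (fun l => (hF_nonneg l).mono fun x hx => (norm_of_nonneg hx).le)
    (.of_forall fun x => (hF_hasSum x).summable)
    (hint.congr_fun (fun x _ => (hF_hasSum x).tsum_eq.symm) measurableSet_Ioi)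
    (.of_forall hF_hasSum)
  simp only [F, integral_rpow_mul_marcumQTerm_mul_exp hk hp] at hseries
  exact ⟨hint, hseries.summable, hseries.tsum_eq.symm⟩

/-- exact infinite series representation of
`∫₀^∞ x^(2k-1) Q_m(ax,b) e^(-px²) dx` for arbitrary positive reals `a,b,k,m,p`. -/
theorem integral_marcumQ_series (a b k m p : ℝ)
    (ha : 0 < a) (hb : 0 < b) (hk : 0 < k) (hm : 0 < m) (hp : 0 < p) :
    IntegrableOn
      (fun x : ℝ => x ^ (2 * k - 1) * marcumQ m (a * x) b * Real.exp (-p * x ^ 2))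
      (Set.Ioi 0) ∧
    Summable (fun l : ℕ =>
      a ^ (2 * l) * 2 ^ (k - 1) * Real.Gamma (k + l) * uGamma (m + l) (b ^ 2 / 2) /
        (Nat.factorial l * Real.Gamma (m + l) * (a ^ 2 + 2 * p) ^ (k + l))) ∧
    ∫ x in Set.Ioi (0 : ℝ),
        x ^ (2 * k - 1) * marcumQ m (a * x) b * Real.exp (-p * x ^ 2) =
      ∑' l : ℕ,
        a ^ (2 * l) * 2 ^ (k - 1) * Real.Gamma (k + l) * uGamma (m + l) (b ^ 2 / 2) /
          (Nat.factorial l * Real.Gamma (m + l) * (a ^ 2 + 2 * p) ^ (k + l)) :=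
  integral_marcumQ_series_general a b k m p hk hm hp
end

section
/- Let b, q, m be positive real numbers and let l be a natural number. Then ∫₀^∞ y^{2l−m+1} e^{−q y²} I_m(b y) dy = Γ(l+1) · (b/2)^m / ( 2 · q^{l+1} · Γ(m+1) ) · ₁F₁( l+1, m+1, b²/(4q) ), where the integral on the left converges. -/
open MeasureTheory Real Filter

lemma my_choose_le_two_pow (n k : ℕ) : n.choose k ≤ 2 ^ n := by
  rcases le_or_gt k n with h | h
  · calc n.choose k ≤ ∑ i ∈ Finset.range (n+1), n.choose i :=
        Finset.single_le_sum (fun i _ => Nat.zero_le _) (Finset.mem_range.mpr (by omega))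
      _ = 2 ^ n := Nat.sum_range_choose n
  · simp [Nat.choose_eq_zero_of_lt h]

lemma my_factorial_bound (l j : ℕ) : ((l+j).factorial : ℝ) ≤ 2 ^ (l+j) * l.factorial * j.factorial := by
  have h := Nat.choose_mul_factorial_mul_factorial (Nat.le_add_right l j)
  have h2 : (l+j) - l = j := by omega
  rw [h2] at h
  have h3 := my_choose_le_two_pow (l+j) l
  calc ((l+j).factorial : ℝ) = ((l+j).choose l : ℝ) * l.factorial * j.factorial := by
        rw [← h]; push_cast; ring
    _ ≤ 2 ^ (l+j) * l.factorial * j.factorial := by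
        have : ((l+j).choose l : ℝ) ≤ 2 ^ (l+j) := by exact_mod_cast h3
        have p1 : (0:ℝ) ≤ l.factorial := by positivity
        have p2 : (0:ℝ) ≤ j.factorial := by positivity
        have := mul_le_mul_of_nonneg_right (mul_le_mul_of_nonneg_right this p1) p2
        linarith

lemma my_gamma_lb {m : ℝ} (hm : 0 < m) (j : ℕ) :
    (j.factorial : ℝ) * Real.Gamma (m+1) ≤ Real.Gamma (m+1+j) := by
  induction j with
  | zero => simp
  | succ j ih =>
    have harg : m + 1 + (j+1 : ℕ) = (m + 1 + j) + 1 := by push_cast; ring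
    have hne : m + 1 + (j:ℝ) ≠ 0 := by positivity
    have hgam : Real.Gamma (m+1+(j+1:ℕ)) = (m+1+j) * Real.Gamma (m+1+j) := by
      rw [harg, Real.Gamma_add_one hne]
    have hpos : 0 < Real.Gamma (m+1+j) := Real.Gamma_pos_of_pos (by positivity)
    have h1 : ((j+1 : ℕ).factorial : ℝ) * Real.Gamma (m+1)
        = (j+1 : ℝ) * ((j.factorial : ℝ) * Real.Gamma (m+1)) := by
      rw [Nat.factorial_succ]; push_cast; ring
    rw [hgam, h1]
    have hle : (j+1 : ℝ) ≤ m + 1 + j := by linarith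
    have h2 : (j+1:ℝ) * ((j.factorial : ℝ) * Real.Gamma (m+1)) ≤ (j+1:ℝ) * Real.Gamma (m+1+j) := by
      apply mul_le_mul_of_nonneg_left ih (by positivity)
    calc (j+1:ℝ) * ((j.factorial : ℝ) * Real.Gamma (m+1)) ≤ (j+1:ℝ) * Real.Gamma (m+1+j) := h2
      _ ≤ (m+1+j) * Real.Gamma (m+1+j) := mul_le_mul_of_nonneg_right hle hpos.le

/-- `∫₀^∞ y^(2l-m+1) e^(-qy²) I_m(by) dy
  = Γ(l+1) (b/2)^m / (2 q^(l+1) Γ(m+1)) · ₁F₁(l+1, m+1, b²/(4q))`. -/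
theorem integral_besselI_closed_form (b q m : ℝ) (l : ℕ)
    (hb : 0 < b) (hq : 0 < q) (hm : 0 < m) :
    IntegrableOn
      (fun y : ℝ => y ^ (2 * (l : ℝ) - m + 1) * Real.exp (-q * y ^ 2) * besselI m (b * y))
      (Set.Ioi 0) ∧
    ∫ y in Set.Ioi (0 : ℝ),
        y ^ (2 * (l : ℝ) - m + 1) * Real.exp (-q * y ^ 2) * besselI m (b * y) =
      Real.Gamma (l + 1) * (b / 2) ^ m / (2 * q ^ (l + 1) * Real.Gamma (m + 1)) *
        kummer (l + 1) (m + 1) (b ^ 2 / (4 * q)) := by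
  have hb2 : (0:ℝ) < b/2 := by positivity
  have hΓm : 0 < Real.Gamma (m+1) := Real.Gamma_pos_of_pos (by positivity)
  set c : ℕ → ℝ := fun j => (b/2) ^ (m + 2*(j:ℝ)) / (j.factorial * Real.Gamma (m + j + 1)) with hc
  set f : ℕ → ℝ → ℝ := fun j y => c j * (y ^ (2*(l:ℝ) + 2*j + 1) * Real.exp (-q * y^2)) with hfdef
  set a : ℕ → ℝ := fun j => c j * ((l+j).factorial / (2 * q ^ (l+j+1))) with hadef
  have hΓj : ∀ j : ℕ, 0 < Real.Gamma (m + j + 1) :=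
    fun j => Real.Gamma_pos_of_pos (by positivity)
  have hcpos : ∀ j, 0 < c j := by
    intro j
    have h1 := hΓj j
    rw [hc]
    have h2 : (0:ℝ) < j.factorial := by positivity
    positivity
  have hpow : ∀ j : ℕ, (b/2) ^ (m + 2*(j:ℝ)) = (b/2)^m * (b^2/4)^j := by
    intro j
    rw [Real.rpow_add hb2, show (2*(j:ℝ)) = ((2*j : ℕ):ℝ) by push_cast; ring,
      Real.rpow_natCast, pow_mul]
    congr 2
    ring
  have hcbound : ∀ j, c j ≤ (b/2)^m / Real.Gamma (m+1) * (b^2/4)^j / (j.factorial * j.factorial) := by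
    intro j
    rw [hc]
    have hlbd : (j.factorial : ℝ) * Real.Gamma (m+1) ≤ Real.Gamma (m + j + 1) := by
      rw [show m + (j:ℝ) + 1 = m + 1 + j by ring]
      exact my_gamma_lb hm j
    have h1 : (b/2) ^ (m + 2*(j:ℝ)) / (j.factorial * Real.Gamma (m + j + 1)) ≤
        (b/2) ^ (m + 2*(j:ℝ)) / (j.factorial * (j.factorial * Real.Gamma (m+1))) := by
      apply div_le_div_of_nonneg_left (by positivity) _ _
      · have : (0:ℝ) < j.factorial := by positivity
        positivity
      · apply mul_le_mul_of_nonneg_left hlbd (by positivity)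
    calc (b/2) ^ (m + 2*(j:ℝ)) / (j.factorial * Real.Gamma (m + j + 1))
        ≤ (b/2) ^ (m + 2*(j:ℝ)) / (j.factorial * (j.factorial * Real.Gamma (m+1))) := h1
      _ = (b/2)^m / Real.Gamma (m+1) * (b^2/4)^j / (j.factorial * j.factorial) := by
          rw [hpow j]
          have : (0:ℝ) < j.factorial := by positivity
          field_simp
  -- measurability of each term
  have hfmeas : ∀ j, Measurable (f j) := by
    intro j
    apply Measurable.const_mul
    fun_prop
  -- integrability of each term
  have hfint : ∀ j, IntegrableOn (f j) (Set.Ioi 0) := by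
    intro j
    apply Integrable.const_mul
    refine integrableOn_rpow_mul_exp_neg_mul_sq hq ?_
    have h1 : (0:ℝ) ≤ (l:ℝ) := Nat.cast_nonneg l
    have h2 : (0:ℝ) ≤ (j:ℝ) := Nat.cast_nonneg j
    linarith
  -- nonnegativity of terms
  have hfnn : ∀ j, ∀ y : ℝ, 0 < y → 0 ≤ f j y := by
    intro j y hy
    have h0 := (hcpos j).le
    have h1 : (0:ℝ) ≤ y ^ (2*(l:ℝ) + 2*(j:ℝ) + 1) := Real.rpow_nonneg hy.le _
    have h2 : (0:ℝ) ≤ Real.exp (-q * y^2) := (Real.exp_pos _).le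
    rw [hfdef]
    positivity
  -- value of each term integral
  have hfval : ∀ j, ∫ y in Set.Ioi (0:ℝ), f j y = a j := by
    intro j
    rw [hfdef, hadef]
    simp only
    rw [MeasureTheory.integral_const_mul]
    congr 1
    have hs : (-1:ℝ) < 2*(l:ℝ) + 2*j + 1 := by
      have h1 : (0:ℝ) ≤ (l:ℝ) := Nat.cast_nonneg l
      have h2 : (0:ℝ) ≤ (j:ℝ) := Nat.cast_nonneg j
      linarith
    have key : ∫ y in Set.Ioi (0:ℝ), y ^ (2*(l:ℝ) + 2*j + 1) * Real.exp (-q * y^2)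
        = q ^ (-(2*(l:ℝ) + 2*j + 1 + 1)/2) * (1/2) * Real.Gamma ((2*(l:ℝ) + 2*j + 1 + 1)/2) := by
      simp_rw [← Real.rpow_two]
      exact integral_rpow_mul_exp_neg_mul_rpow two_pos hs hq
    rw [key]
    have e1 : (-(2*(l:ℝ) + 2*j + 1 + 1)/2 : ℝ) = -((l+j+1 : ℕ):ℝ) := by push_cast; ring
    have e2 : ((2*(l:ℝ) + 2*j + 1 + 1)/2 : ℝ) = ((l+j : ℕ):ℝ) + 1 := by push_cast; ring
    rw [e1, e2, Real.Gamma_nat_eq_factorial, Real.rpow_neg hq.le, Real.rpow_natCast]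
    have hqp : (0:ℝ) < q ^ (l+j+1) := by positivity
    rw [eq_div_iff (by positivity : (2:ℝ) * q ^ (l+j+1) ≠ 0)]
    field_simp
  -- summability of a
  have hann : ∀ j, 0 ≤ a j := by
    intro j
    rw [hadef]
    have h0 := (hcpos j).le
    have h2 : (0:ℝ) ≤ ((l+j).factorial : ℝ) / (2 * q ^ (l+j+1)) := by positivity
    positivity
  have hasum : Summable a := by
    set K : ℝ := (b/2)^m / Real.Gamma (m+1) * (2^l * l.factorial / (2 * q ^ (l+1))) with hK
    apply Summable.of_nonneg_of_le hann
      (f := fun j => K * ((b^2/(2*q))^j / j.factorial))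
    · intro j
      rw [hadef]
      have hfacpos : (0:ℝ) < (j.factorial:ℝ) := by positivity
      have hfacl : (0:ℝ) < (l.factorial:ℝ) := by positivity
      have hqlj : (0:ℝ) < q ^ (l+j+1) := by positivity
      have h1 : ((l+j).factorial : ℝ) / (2 * q ^ (l+j+1))
          ≤ 2^(l+j) * l.factorial * j.factorial / (2 * q ^ (l+j+1)) := by
        gcongr
        exact my_factorial_bound l j
      calc c j * (((l+j).factorial : ℝ) / (2 * q ^ (l+j+1)))
          ≤ ((b/2)^m / Real.Gamma (m+1) * (b^2/4)^j / (j.factorial * j.factorial)) *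
            (2^(l+j) * l.factorial * j.factorial / (2 * q ^ (l+j+1))) := by
            apply mul_le_mul (hcbound j) h1 (by positivity) (by positivity)
        _ = K * ((b^2/(2*q))^j / j.factorial) := by
            rw [hK, show l+j+1 = (l+1)+j by ring, pow_add q (l+1) j]
            have hq1 : (0:ℝ) < q ^ (l+1) := by positivity
            have hqj : (0:ℝ) < q ^ j := by positivity
            field_simp
            rw [div_pow, div_pow, mul_pow, pow_add, show ((4:ℝ))^j = 2^j * 2^j by rw [← mul_pow]; norm_num]
            field_simp
    · exact (Real.summable_pow_div_factorial _).mul_left K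
  -- pointwise identity on Ioi 0
  have hpt : ∀ y : ℝ, 0 < y →
      y ^ (2*(l:ℝ) - m + 1) * Real.exp (-q * y^2) * besselI m (b*y) = ∑' j, f j y := by
    intro y hy
    rw [besselI, show b * y / 2 = (b/2) * y by ring, ← tsum_mul_left]
    apply tsum_congr
    intro j
    rw [Real.mul_rpow hb2.le hy.le]
    have hyy : y ^ (2*(l:ℝ) - m + 1) * y ^ (m + 2*(j:ℝ)) = y ^ (2*(l:ℝ) + 2*j + 1) := by
      rw [← Real.rpow_add hy]
      congr 1
      ring
    calc y ^ (2*(l:ℝ) - m + 1) * Real.exp (-q*y^2) *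
          ((b/2) ^ (m + 2*(j:ℝ)) * y ^ (m + 2*(j:ℝ)) / (j.factorial * Real.Gamma (m + j + 1)))
        = (y ^ (2*(l:ℝ) - m + 1) * y ^ (m + 2*(j:ℝ))) *
          ((b/2) ^ (m + 2*(j:ℝ)) / (j.factorial * Real.Gamma (m + j + 1)) * Real.exp (-q*y^2)) := by
          ring
      _ = f j y := by rw [hyy, hfdef, hc]; ring
  -- pointwise summability on Ioi 0
  have hsumy : ∀ y : ℝ, 0 < y → Summable (fun j => f j y) := by
    intro y hy
    set D : ℝ := (b/2)^m / Real.Gamma (m+1) * (y ^ (2*(l:ℝ)+1) * Real.exp (-q*y^2)) with hD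
    have hDnn : 0 ≤ D := by
      rw [hD]
      have h1 : (0:ℝ) ≤ y ^ (2*(l:ℝ)+1) := Real.rpow_nonneg hy.le _
      positivity
    apply Summable.of_nonneg_of_le (fun j => hfnn j y hy)
      (f := fun j => D * ((b^2*y^2/4)^j / j.factorial))
    · intro j
      have hfacpos : (0:ℝ) < (j.factorial:ℝ) := by positivity
      have hyp : y ^ (2*(l:ℝ) + 2*(j:ℝ) + 1) = y ^ (2*(l:ℝ)+1) * (y^2)^j := by
        rw [show (2*(l:ℝ) + 2*(j:ℝ) + 1) = (2*(l:ℝ)+1) + ((2*j:ℕ):ℝ) by push_cast; ring,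
          Real.rpow_add hy, Real.rpow_natCast, pow_mul]
      have hEnn : (0:ℝ) ≤ y ^ (2*(l:ℝ)+2*(j:ℝ)+1) * Real.exp (-q*y^2) :=
        mul_nonneg (Real.rpow_nonneg hy.le _) (Real.exp_pos _).le
      calc f j y = c j * (y ^ (2*(l:ℝ)+2*(j:ℝ)+1) * Real.exp (-q*y^2)) := by rw [hfdef]
        _ ≤ ((b/2)^m / Real.Gamma (m+1) * (b^2/4)^j / (j.factorial*j.factorial)) *
            (y ^ (2*(l:ℝ)+2*(j:ℝ)+1) * Real.exp (-q*y^2)) :=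
            mul_le_mul_of_nonneg_right (hcbound j) hEnn
        _ = D * ((b^2*y^2/4)^j / j.factorial) * (1/j.factorial) := by
            rw [hyp, hD]
            field_simp
            ring
        _ ≤ D * ((b^2*y^2/4)^j / j.factorial) := by
            have hXnn : 0 ≤ D * ((b^2*y^2/4)^j / j.factorial) := by positivity
            have h1 : (1:ℝ)/j.factorial ≤ 1 := by
              rw [div_le_one hfacpos]
              exact_mod_cast Nat.one_le_iff_ne_zero.mpr (Nat.factorial_ne_zero j)
            exact mul_le_of_le_one_right hXnn h1
    · exact (Real.summable_pow_div_factorial _).mul_left D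
  -- the series function
  set G : ℝ → ℝ := fun y => ∑' j, f j y with hG
  have haeeq : (fun y : ℝ => y ^ (2 * (l:ℝ) - m + 1) * Real.exp (-q * y ^ 2) * besselI m (b * y))
      =ᵐ[volume.restrict (Set.Ioi 0)] G := by
    rw [Filter.EventuallyEq, MeasureTheory.ae_restrict_iff' measurableSet_Ioi]
    exact Filter.Eventually.of_forall fun y hy => hpt y hy
  have hGaem : AEMeasurable G (volume.restrict (Set.Ioi 0)) := by
    apply aemeasurable_of_tendsto_metrizable_ae atTop
      (f := fun n y => ∑ j ∈ Finset.range n, f j y)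
      (fun n => (Finset.measurable_sum _ fun j _ => hfmeas j).aemeasurable)
    rw [MeasureTheory.ae_restrict_iff' measurableSet_Ioi]
    exact Filter.Eventually.of_forall fun y hy => ((hsumy y hy).hasSum).tendsto_sum_nat
  have hGnn : 0 ≤ᵐ[volume.restrict (Set.Ioi 0)] G := by
    filter_upwards [MeasureTheory.ae_restrict_mem measurableSet_Ioi] with y hy
    exact tsum_nonneg fun j => hfnn j y hy
  -- the lintegral computation
  have hlint : ∫⁻ y in Set.Ioi (0:ℝ), ENNReal.ofReal (G y) = ENNReal.ofReal (∑' j, a j) := by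
    have step1 : ∫⁻ y in Set.Ioi (0:ℝ), ENNReal.ofReal (G y)
        = ∫⁻ y in Set.Ioi (0:ℝ), ∑' j, ENNReal.ofReal (f j y) := by
      apply MeasureTheory.lintegral_congr_ae
      filter_upwards [MeasureTheory.ae_restrict_mem measurableSet_Ioi] with y hy
      rw [hG]
      exact ENNReal.ofReal_tsum_of_nonneg (fun j => hfnn j y hy) (hsumy y hy)
    rw [step1, MeasureTheory.lintegral_tsum
      (fun j => ((hfmeas j).ennreal_ofReal).aemeasurable)]
    have step2 : ∀ j, ∫⁻ y in Set.Ioi (0:ℝ), ENNReal.ofReal (f j y) = ENNReal.ofReal (a j) := by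
      intro j
      rw [← hfval j]
      rw [← MeasureTheory.ofReal_integral_eq_lintegral_ofReal (hfint j)]
      filter_upwards [MeasureTheory.ae_restrict_mem measurableSet_Ioi] with y hy
      exact hfnn j y hy
    simp_rw [step2]
    exact (ENNReal.ofReal_tsum_of_nonneg hann hasum).symm
  have hGint : IntegrableOn G (Set.Ioi 0) := by
    refine ⟨hGaem.aestronglyMeasurable, ?_⟩
    rw [MeasureTheory.hasFiniteIntegral_iff_ofReal hGnn, hlint]
    exact ENNReal.ofReal_lt_top
  have hGval : ∫ y in Set.Ioi (0:ℝ), G y = ∑' j, a j := by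
    rw [MeasureTheory.integral_eq_lintegral_of_nonneg_ae hGnn hGaem.aestronglyMeasurable, hlint,
      ENNReal.toReal_ofReal (tsum_nonneg hann)]
  constructor
  · exact hGint.congr haeeq.symm
  · rw [MeasureTheory.integral_congr_ae haeeq, hGval, kummer, ← tsum_mul_left]
    apply tsum_congr
    intro j
    -- termwise algebraic identity
    have hg1 : Real.Gamma ((l:ℝ) + 1 + j) = (l+j).factorial := by
      rw [show (l:ℝ) + 1 + j = ((l+j : ℕ):ℝ) + 1 by push_cast; ring,
        Real.Gamma_nat_eq_factorial]
    have hg2 : Real.Gamma ((l:ℝ) + 1) = l.factorial := Real.Gamma_nat_eq_factorial l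
    have hg3 : Real.Gamma (m + 1 + j) = Real.Gamma (m + j + 1) := by
      congr 1
      ring
    rw [hadef, hc]
    simp only [poch, hg1, hg2, hg3]
    have hΓjp := hΓj j
    have hfacl : (0:ℝ) < (l.factorial:ℝ) := by positivity
    have hfacj : (0:ℝ) < (j.factorial:ℝ) := by positivity
    have hq1 : (0:ℝ) < q ^ (l+1) := by positivity
    have hqj : (0:ℝ) < q ^ j := by positivity
    rw [hpow j, show l+j+1 = (l+1)+j by ring, pow_add q (l+1) j]
    field_simp [hΓjp.ne', hΓm.ne', hfacl.ne', hfacj.ne', hq1.ne', hqj.ne', div_pow, mul_pow]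
    ring_nf
    rw [mul_assoc (b ^ (j * 2)) (q ^ j), ← mul_pow q q⁻¹ j, mul_inv_cancel₀ hq.ne', one_pow, mul_one]
end

section
/- Let n be a positive integer and z > 0. Then the modified Bessel function of half-integer order n − 1/2 satisfies the finite closed form I_{n−1/2}(z) = Σ_{l=0}^{n−1} (−1)^l Γ(n+l) e^{z} / ( l! √π Γ(n−l) (2z)^{l+1/2} ) + Σ_{l=0}^{n−1} (−1)^n Γ(n+l) e^{−z} / ( l! √π Γ(n−l) (2z)^{l+1/2} ). -/
open MeasureTheory Real Filter

/-!
`I_ν(z) = (z/2)^ν ₀F̃₁(; ν + 1; z²/4)`, and the contiguous relation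
`₀F̃₁(; b) - b ₀F̃₁(; b + 1) = t ₀F̃₁(; b + 2)` holds for every `b`, because
`1/Γ(s) = s/Γ(s + 1)` holds everywhere, poles included. This gives
`I_{ν-1}(z) - I_{ν+1}(z) = (2ν/z) I_ν(z)`. At the orders `±1/2` the series are those of `sinh`
and `cosh`. The Bessel polynomials satisfy the same three-term recurrence
`y_{m+2} = y_m + (2m + 3) x y_{m+1}`, so induction on `m` gives
`I_{m+1/2}(z) = (e^z y_m(-1/z) - (-1)^m e^{-z} y_m(1/z)) / √(2πz)`; with `n = m + 1`, the two
sums of the theorem are this formula written out.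
-/
open Finset
open scoped Nat

lemma Real.inv_Gamma_eq_mul_inv_Gamma_add_one (s : ℝ) : (Gamma s)⁻¹ = s * (Gamma (s + 1))⁻¹ := by
  rcases eq_or_ne s 0 with rfl | hs
  · simp
  · rw [Gamma_add_one hs, mul_inv, mul_inv_cancel_left₀ hs]

lemma factorial_mul_Gamma_nat_add_half (j : ℕ) :
    j ! * Gamma (j + 1 / 2) = (2 * j)! * √π / 4 ^ j := by
  induction j with
  | zero => norm_num [Gamma_one_half_eq]
  | succ j ih =>
    rw [Nat.cast_succ, add_right_comm, Gamma_add_one (by positivity), Nat.factorial_succ,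
      show 2 * (j + 1) = 2 * j + 1 + 1 by ring, Nat.factorial_succ, Nat.factorial_succ]
    push_cast
    linear_combination (j + 1 : ℝ) * (j + 1 / 2) * ih

/-- The regularized confluent hypergeometric limit function `₀F̃₁(; b; t)`. -/
noncomputable def hyp0F1Reg (b t : ℝ) : ℝ := ∑' j : ℕ, t ^ j / (j ! * Gamma (b + j))

lemma summable_hyp0F1Reg (b t : ℝ) : Summable fun j : ℕ ↦ t ^ j / (j ! * Gamma (b + j)) := by
  refine (Real.summable_pow_div_factorial |t|).of_norm_bounded_eventually_nat ?_
  obtain ⟨N, hN⟩ := exists_nat_ge (2 - b)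
  filter_upwards [eventually_ge_atTop N] with j hj
  have hbj : 2 ≤ b + j := by linarith [(Nat.cast_le (α := ℝ)).2 hj]
  have hΓ : 1 ≤ Gamma (b + j) :=
    Gamma_two ▸ Gamma_strictMonoOn_Ici.monotoneOn (Set.self_mem_Ici) hbj hbj
  rw [norm_div, norm_mul, norm_pow, Real.norm_eq_abs, Real.norm_natCast,
    Real.norm_of_nonneg (by linarith)]
  gcongr
  exact le_mul_of_one_le_right (by positivity) hΓ

lemma hyp0F1Reg_sub_mul (b t : ℝ) :
    hyp0F1Reg b t - b * hyp0F1Reg (b + 1) t = t * hyp0F1Reg (b + 2) t := by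
  have hs := (summable_hyp0F1Reg b t).sub ((summable_hyp0F1Reg (b + 1) t).mul_left b)
  rw [hyp0F1Reg, hyp0F1Reg, hyp0F1Reg, ← tsum_mul_left, ← tsum_mul_left,
    ← (summable_hyp0F1Reg b t).tsum_sub ((summable_hyp0F1Reg (b + 1) t).mul_left b),
    hs.tsum_eq_zero_add]
  have h0 : (Gamma b)⁻¹ - b * (Gamma (b + 1))⁻¹ = 0 := by
    rw [Real.inv_Gamma_eq_mul_inv_Gamma_add_one, sub_self]
  simp only [pow_zero, Nat.factorial_zero, Nat.cast_one, CharP.cast_eq_zero, add_zero, one_mul,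
    one_div, h0, zero_add]
  refine tsum_congr fun j ↦ ?_
  have hΓ := Real.inv_Gamma_eq_mul_inv_Gamma_add_one (b + (j + 1))
  rw [show b + (j + 1) + 1 = b + 1 + (j + 1) by ring] at hΓ
  rw [Nat.factorial_succ]
  push_cast
  rw [div_eq_mul_inv, mul_inv, hΓ, show b + 1 + (j + 1) = b + 2 + j by ring]
  field_simp
  ring

lemma besselI_eq_rpow_mul_hyp0F1Reg (ν : ℝ) {z : ℝ} (hz : 0 < z) :
    besselI ν z = (z / 2) ^ ν * hyp0F1Reg (ν + 1) ((z / 2) ^ 2) := by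
  rw [besselI, hyp0F1Reg, ← tsum_mul_left]
  refine tsum_congr fun j ↦ ?_
  rw [Real.rpow_add (by positivity), mul_comm (2 : ℝ), Real.rpow_mul (by positivity),
    Real.rpow_natCast, Real.rpow_two, add_right_comm, mul_div_assoc, pow_right_comm]

lemma besselI_sub_besselI (ν : ℝ) {z : ℝ} (hz : 0 < z) :
    besselI (ν - 1) z - besselI (ν + 1) z = 2 * ν / z * besselI ν z := by
  have hz2 : z / 2 ≠ 0 := by positivity
  have h := hyp0F1Reg_sub_mul ν ((z / 2) ^ 2)
  rw [besselI_eq_rpow_mul_hyp0F1Reg _ hz, besselI_eq_rpow_mul_hyp0F1Reg _ hz,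
    besselI_eq_rpow_mul_hyp0F1Reg _ hz, sub_add_cancel, add_assoc, one_add_one_eq_two,
    Real.rpow_sub_one hz2, Real.rpow_add_one hz2, eq_add_of_sub_eq' h]
  field_simp
  ring

lemma div_two_sq_pow (z : ℝ) (j : ℕ) : ((z / 2) ^ 2) ^ j = z ^ (2 * j) / 4 ^ j := by
  rw [div_pow, div_pow, ← pow_mul]
  norm_num

lemma hyp0F1Reg_one_half (z : ℝ) : hyp0F1Reg (1 / 2) ((z / 2) ^ 2) = cosh z / √π := by
  refine (tsum_congr fun j ↦ ?_).trans ((Real.hasSum_cosh z).div_const √π).tsum_eq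
  rw [add_comm, factorial_mul_Gamma_nat_add_half, div_two_sq_pow]
  field_simp

lemma mul_hyp0F1Reg_three_halves (z : ℝ) :
    z * hyp0F1Reg (3 / 2) ((z / 2) ^ 2) = 2 * sinh z / √π := by
  rw [hyp0F1Reg, ← tsum_mul_left]
  refine (tsum_congr fun j ↦ ?_).trans (((Real.hasSum_sinh z).mul_left 2).div_const √π).tsum_eq
  have hΓ : j ! * Gamma (3 / 2 + j) = (2 * j + 1)! * √π / (2 * 4 ^ j) := by
    rw [show (3 / 2 : ℝ) + j = j + 1 / 2 + 1 by ring, Gamma_add_one (by positivity),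
      mul_left_comm, factorial_mul_Gamma_nat_add_half, Nat.factorial_succ]
    push_cast
    field_simp
  rw [hΓ, div_two_sq_pow]
  field_simp
  ring

lemma sqrt_div_two_eq (z : ℝ) : √(z / 2) = √(2 * z) / 2 := by
  rw [show z / 2 = 2 * z / 2 ^ 2 by ring, Real.sqrt_div' _ (by positivity),
    Real.sqrt_sq zero_le_two]

lemma besselI_one_half {z : ℝ} (hz : 0 < z) :
    besselI (1 / 2) z = (exp z - exp (-z)) / (√π * √(2 * z)) := by
  have hs := Real.mul_self_sqrt (show 0 ≤ 2 * z by positivity)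
  have hπ := Real.sqrt_pos.2 pi_pos
  have hF : hyp0F1Reg (3 / 2) ((z / 2) ^ 2) = 2 * sinh z / √π / z := by
    rw [eq_div_iff hz.ne', mul_comm, mul_hyp0F1Reg_three_halves]
  rw [besselI_eq_rpow_mul_hyp0F1Reg _ hz, ← Real.sqrt_eq_rpow, sqrt_div_two_eq z,
    show (1 / 2 : ℝ) + 1 = 3 / 2 by norm_num, hF, sinh_eq]
  field_simp
  linear_combination (exp z - exp (-z)) * hs

lemma besselI_neg_one_half {z : ℝ} (hz : 0 < z) :
    besselI (-1 / 2) z = (exp z + exp (-z)) / (√π * √(2 * z)) := by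
  have hπ := Real.sqrt_pos.2 pi_pos
  rw [besselI_eq_rpow_mul_hyp0F1Reg _ hz, neg_div, Real.rpow_neg (by positivity),
    ← Real.sqrt_eq_rpow, sqrt_div_two_eq z, show -(1 / 2 : ℝ) + 1 = 1 / 2 by norm_num,
    hyp0F1Reg_one_half, cosh_eq]
  field_simp

/-- The coefficient `(m + k)! / ((m - k)! k!)` of the Bessel polynomial `y_m`. Written with `Γ`, it
vanishes for `k > m`, where `Γ` is evaluated at a nonpositive integer (junk value `0`). -/
noncomputable def besselPolyCoeff (m k : ℕ) : ℝ := Gamma (m + k + 1) / (k ! * Gamma (m - k + 1))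

/-- The Bessel polynomial `y_m`, normalized by `y_1(x) = 1 + x`. -/
noncomputable def besselPoly (m : ℕ) (x : ℝ) : ℝ :=
  ∑ k ∈ range (m + 1), besselPolyCoeff m k * (x / 2) ^ k

lemma besselPolyCoeff_eq_zero_of_lt {m k : ℕ} (h : m < k) : besselPolyCoeff m k = 0 := by
  rw [besselPolyCoeff, show (m : ℝ) - k + 1 = -((k - (m + 1) : ℕ) : ℝ) by
      rw [Nat.cast_sub (by omega)]; push_cast; ring,
    Gamma_neg_nat_eq_zero, mul_zero, div_zero]

lemma besselPolyCoeff_zero_right (m : ℕ) : besselPolyCoeff m 0 = 1 := by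
  simp [besselPolyCoeff, (Gamma_pos_of_pos (show (0 : ℝ) < m + 1 by positivity)).ne']

lemma besselPolyCoeff_add_two_succ (m k : ℕ) :
    besselPolyCoeff (m + 2) (k + 1) =
      besselPolyCoeff m (k + 1) + 2 * (2 * m + 3) * besselPolyCoeff (m + 1) k := by
  have hnum : Gamma (m + k + 4) = (m + k + 3) * (m + k + 2) * Gamma (m + k + 2) := by
    rw [show (m : ℝ) + k + 4 = m + k + 2 + 1 + 1 by ring, Gamma_add_one (by positivity),
      Gamma_add_one (by positivity)]
    ring
  have hden : (Gamma (m - k))⁻¹ = (m - k) * (m - k + 1) * (Gamma (m - k + 2))⁻¹ := by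
    rw [Real.inv_Gamma_eq_mul_inv_Gamma_add_one,
      Real.inv_Gamma_eq_mul_inv_Gamma_add_one (m - k + 1)]
    ring_nf
  simp only [besselPolyCoeff, div_eq_mul_inv, mul_inv, Nat.factorial_succ]
  push_cast
  rw [show (m : ℝ) + 2 + (k + 1) + 1 = m + k + 4 by ring,
    show (m : ℝ) + (k + 1) + 1 = m + k + 2 by ring, show (m : ℝ) + 1 + k + 1 = m + k + 2 by ring,
    show (m : ℝ) + 2 - (k + 1) + 1 = m - k + 2 by ring, show (m : ℝ) - (k + 1) + 1 = m - k by ring,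
    show (m : ℝ) + 1 - k + 1 = m - k + 2 by ring, hnum, hden]
  field_simp
  ring

lemma besselPoly_eq_sum_range {m N : ℕ} (h : m < N) (x : ℝ) :
    besselPoly m x = ∑ k ∈ range N, besselPolyCoeff m k * (x / 2) ^ k :=
  sum_subset (range_subset_range.2 h) fun k _ hk ↦ by
    rw [besselPolyCoeff_eq_zero_of_lt (by simpa using hk), zero_mul]

lemma besselPoly_one (x : ℝ) : besselPoly 1 x = 1 + x := by
  have hΓ : Gamma 3 = 2 := by
    rw [show (3 : ℝ) = 2 + 1 by norm_num, Gamma_add_one two_ne_zero, Gamma_two, mul_one]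
  norm_num [besselPoly, sum_range_succ, besselPolyCoeff, hΓ]
  ring

lemma besselPoly_add_two (m : ℕ) (x : ℝ) :
    besselPoly (m + 2) x = besselPoly m x + (2 * m + 3) * x * besselPoly (m + 1) x := by
  rw [besselPoly, besselPoly_eq_sum_range (show m < m + 3 by omega),
    besselPoly, sum_range_succ', sum_range_succ' _ (m + 2), besselPolyCoeff_zero_right,
    besselPolyCoeff_zero_right, mul_sum, add_right_comm, ← sum_add_distrib]
  congr 1
  refine sum_congr rfl fun k _ ↦ ?_
  rw [besselPolyCoeff_add_two_succ]
  ring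

lemma besselI_nat_add_half {z : ℝ} (hz : 0 < z) (m : ℕ) :
    besselI (m + 1 / 2) z =
      (exp z * besselPoly m (-z⁻¹) - (-1) ^ m * exp (-z) * besselPoly m z⁻¹) / (√π * √(2 * z)) := by
  induction m using Nat.twoStepInduction with
  | zero => simpa [besselPoly, besselPolyCoeff_zero_right] using besselI_one_half hz
  | one =>
    have h := besselI_sub_besselI (1 / 2) hz
    rw [show (1 / 2 : ℝ) - 1 = -1 / 2 by norm_num, besselI_neg_one_half hz,
      besselI_one_half hz] at h
    rw [Nat.cast_one, show (1 : ℝ) + 1 / 2 = 1 / 2 + 1 by norm_num, besselPoly_one,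
      besselPoly_one]
    linear_combination -h
  | more m ih₀ ih₁ =>
    have h := besselI_sub_besselI (m + 3 / 2) hz
    rw [show (m : ℝ) + 3 / 2 - 1 = m + 1 / 2 by ring, ih₀,
      show (m : ℝ) + 3 / 2 = ((m + 1 : ℕ) : ℝ) + 1 / 2 by push_cast; ring, ih₁] at h
    rw [show ((m + 2 : ℕ) : ℝ) + 1 / 2 = ((m + 1 : ℕ) : ℝ) + 1 / 2 + 1 by push_cast; ring,
      besselPoly_add_two, besselPoly_add_two]
    push_cast at h ⊢
    linear_combination -h

lemma rpow_natCast_add_half {x : ℝ} (hx : 0 < x) (l : ℕ) : x ^ ((l : ℝ) + 1 / 2) = x ^ l * √x := by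
  rw [Real.rpow_add hx, Real.rpow_natCast, Real.sqrt_eq_rpow]

lemma Gamma_ratio_div_rpow_eq_besselPolyCoeff (m l : ℕ) {z : ℝ} (hz : 0 < z) (a b : ℝ) :
    a * Gamma (((m + 1 : ℕ) : ℝ) + l) * b /
        (l ! * √π * Gamma (((m + 1 : ℕ) : ℝ) - l) * (2 * z) ^ ((l : ℝ) + 1 / 2)) =
      a * b / (√π * √(2 * z)) * (besselPolyCoeff m l * (z⁻¹ / 2) ^ l) := by
  rw [rpow_natCast_add_half (by positivity), besselPolyCoeff, Nat.cast_succ, add_right_comm,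
    add_sub_right_comm]
  simp only [div_eq_mul_inv, mul_inv, mul_pow, inv_pow]
  ring

/-- finite closed form for the half-integer order modified Bessel
function `I_{n-1/2}(z)`. -/
theorem besselI_half_integer (n : ℕ) (hn : 0 < n) (z : ℝ) (hz : 0 < z) :
    besselI ((n : ℝ) - 1 / 2) z =
      (∑ l ∈ Finset.range n,
        (-1 : ℝ) ^ l * Real.Gamma ((n : ℝ) + l) * Real.exp z /
          (Nat.factorial l * Real.sqrt π * Real.Gamma ((n : ℝ) - l) *
            (2 * z) ^ ((l : ℝ) + 1 / 2))) +
      ∑ l ∈ Finset.range n,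
        (-1 : ℝ) ^ n * Real.Gamma ((n : ℝ) + l) * Real.exp (-z) /
          (Nat.factorial l * Real.sqrt π * Real.Gamma ((n : ℝ) - l) *
            (2 * z) ^ ((l : ℝ) + 1 / 2)) := by
  obtain ⟨m, rfl⟩ := Nat.exists_eq_add_one_of_ne_zero hn.ne'
  rw [show ((m + 1 : ℕ) : ℝ) - 1 / 2 = m + 1 / 2 by push_cast; ring, besselI_nat_add_half hz,
    besselPoly, besselPoly, ← sum_add_distrib, mul_sum, mul_sum, ← sum_sub_distrib, sum_div]
  refine sum_congr rfl fun l _ ↦ ?_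
  rw [Gamma_ratio_div_rpow_eq_besselPolyCoeff m l hz,
    Gamma_ratio_div_rpow_eq_besselPolyCoeff m l hz, neg_div, neg_pow]
  ring
end
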